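/- arXiv:2408.08775 — 7 statements merged into one kernel-verified Lean document; each statement's English description precedes it below -/
import Mathlib

section
/- Every simply connected particle system on the triangular grid with at least three particles and no articulation point contains a 60° particle or a 120° particle. -/
/-! ## The triangular grid -/

/-- Nodes of the triangular grid. -/
abbrev Node : Type := ℤ × ℤ

/-- The six directions `d₀,…,d₅` in cyclic order. -/
def dirv : Fin 6 → Node := ![(1,0), (0,1), (-1,1), (-1,0), (0,-1), (1,-1)]

/-- Adjacency in the triangular grid. -/
def adj (u v : Node) : Prop := ∃ i : Fin 6, v = u + dirv i

instance (u v : Node) : Decidable (adj u v) := by unfold adj; infer_instance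

/-- Reachability inside a set of nodes. -/
def reach (S : Set Node) : Node → Node → Prop :=
  Relation.ReflTransGen (fun a b => a ∈ S ∧ b ∈ S ∧ adj a b)

/-- The subgraph of the grid induced on `S` is connected. -/
def ConnectedOn (S : Set Node) : Prop := ∀ a ∈ S, ∀ b ∈ S, reach S a b

/-- A particle system: a finite nonempty set of nodes inducing a connected subgraph. -/
def IsParticleSystem (P : Finset Node) : Prop := P.Nonempty ∧ ConnectedOn ↑P

/-- `P` is simply connected: the complement induces a connected subgraph. -/
def SimplyConnected (P : Finset Node) : Prop := ConnectedOn {v : Node | v ∉ P}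

/-! ## Configurations -/

/-- A configuration: `c a b = true` means the edge `{a,b}` is directed `a → b`.
The edge `{a,b}` is undirected when `c a b = false` and `c b a = false`. -/
abbrev Cfg : Type := Node → Node → Bool

/-- `{a,b}` is an edge of the graph induced on `P`. -/
def isEdge (P : Finset Node) (a b : Node) : Prop := a ∈ P ∧ b ∈ P ∧ adj a b

instance (P : Finset Node) (a b : Node) : Decidable (isEdge P a b) := by
  unfold isEdge; infer_instance

/-- Well-formedness of a configuration of `P`: only edges of the induced graph carry a
direction, and an edge is directed in at most one way. -/
def ConfigWF (P : Finset Node) (c : Cfg) : Prop :=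
  (∀ a b, c a b = true → isEdge P a b) ∧ (∀ a b, c a b = true → c b a = false)

/-- The set of outgoing directions at `p`. -/
def outSet (P : Finset Node) (c : Cfg) (p : Node) : Set (Fin 6) :=
  {d | p + dirv d ∈ P ∧ c p (p + dirv d) = true}

open Fin.NatCast in
/-- A set of directions is (cyclically) consecutive. -/
def ConsecutiveSet (S : Set (Fin 6)) : Prop :=
  ∃ (i : Fin 6) (k : ℕ), S = {d | ∃ j : ℕ, j < k ∧ d = i + (j : Fin 6)}

/-- R1 at `p`: no edge incident to `p` is undirected. -/
def R1 (P : Finset Node) (c : Cfg) (p : Node) : Prop :=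
  ∀ q, isEdge P p q → (c p q = true ∨ c q p = true)

/-- R2 at `p`: at most three directions are outgoing at `p`. -/
def R2 (P : Finset Node) (c : Cfg) (p : Node) : Prop :=
  (Finset.univ.filter (fun d : Fin 6 => p + dirv d ∈ P ∧ c p (p + dirv d) = true)).card ≤ 3

/-- R3 at `p`: the outgoing directions at `p` are consecutive in the cyclic order. -/
def R3 (P : Finset Node) (c : Cfg) (p : Node) : Prop := ConsecutiveSet (outSet P c p)

/-- R4 at `p`: no triangle of occupied nodes through `p` forms a directed 3-cycle. -/
def R4 (P : Finset Node) (c : Cfg) (p : Node) : Prop :=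
  ¬ ∃ q r : Node, q ∈ P ∧ r ∈ P ∧ adj p q ∧ adj q r ∧ adj r p ∧
    c p q = true ∧ c q r = true ∧ c r p = true

/-- A sink: a particle at which no direction is outgoing. -/
def IsSink (P : Finset Node) (c : Cfg) (p : Node) : Prop :=
  ∀ d : Fin 6, ¬ (p + dirv d ∈ P ∧ c p (p + dirv d) = true)

/-! ## The algorithm -/

/-- Every edge of the induced graph incident to `p` that is undirected becomes
outgoing from `p`. -/
def orientOut (P : Finset Node) (c : Cfg) (p : Node) : Cfg := fun a b =>
  if a = p ∧ isEdge P a b ∧ c a b = false ∧ c b a = false then true else c a b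

/-- Every edge directed outgoing from `p` becomes undirected. -/
def clearOut (c : Cfg) (p : Node) : Cfg := fun a b =>
  if a = p then false else c a b

/-- Activating the particle `p` in the configuration `c`. -/
noncomputable def step (P : Finset Node) (c : Cfg) (p : Node) : Cfg :=
  @ite _ (R2 P (orientOut P c p) p ∧ R3 P (orientOut P c p) p ∧ R4 P (orientOut P c p) p)
    (Classical.propDecidable _)
    (orientOut P c p) (clearOut c p)

/-- `p` is activable in `c`. -/
def Activable (P : Finset Node) (c : Cfg) (p : Node) : Prop := step P c p ≠ c

/-- A configuration is final when no particle is activable. -/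
def Final (P : Finset Node) (c : Cfg) : Prop := ∀ p, ¬ Activable P c p

/-- A sequential execution of the algorithm on `P`. -/
def SeqExec (P : Finset Node) (e : ℕ → Cfg) : Prop :=
  (∀ i, ConfigWF P (e i)) ∧
  ∀ i, (∃ p ∈ P, Activable P (e i) p ∧ e (i+1) = step P (e i) p) ∨
       ((∀ p, ¬ Activable P (e i) p) ∧ e (i+1) = e i)

/-- A configuration occurs infinitely often in an execution. -/
def InfOften (e : ℕ → Cfg) (c : Cfg) : Prop := ∀ N : ℕ, ∃ i, N ≤ i ∧ e i = c

/-- Gouda fairness of a sequential execution. -/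
def GoudaFair (P : Finset Node) (e : ℕ → Cfg) : Prop :=
  ∀ c, InfOften e c → ∀ p ∈ P, Activable P c p → InfOften e (step P c p)

/-- An edge is stable for the suffix starting at `i0`: it is never undirected there. -/
def StableEdge (P : Finset Node) (e : ℕ → Cfg) (i0 : ℕ) (a b : Node) : Prop :=
  isEdge P a b ∧ ∀ i, i0 ≤ i → (e i a b = true ∨ e i b a = true)

/-- An edge is unstable for the suffix starting at `i0`. -/
def UnstableEdge (P : Finset Node) (e : ℕ → Cfg) (i0 : ℕ) (a b : Node) : Prop :=
  isEdge P a b ∧ ∃ i, i0 ≤ i ∧ e i a b = false ∧ e i b a = false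

/-- A final configuration in which every edge is directed, R2, R3 and R4 hold at every
particle and there is exactly one sink. -/
def GoodFinal (P : Finset Node) (c : Cfg) : Prop :=
  Final P c ∧ (∀ p ∈ P, R1 P c p ∧ R2 P c p ∧ R3 P c p ∧ R4 P c p) ∧
  (∃! p, p ∈ P ∧ IsSink P c p)

/-! ## Boundary notions -/

/-- A boundary particle: some grid neighbour is empty. -/
def BoundaryP (P : Finset Node) (p : Node) : Prop := p ∈ P ∧ ∃ d : Fin 6, p + dirv d ∉ P

/-- A pending particle: exactly one grid neighbour is occupied. -/
def Pending (P : Finset Node) (p : Node) : Prop := p ∈ P ∧ ∃! d : Fin 6, p + dirv d ∈ P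

/-- An articulation point of `P`. -/
def Articulation (P : Finset Node) (p : Node) : Prop :=
  p ∈ P ∧ ¬ ConnectedOn (↑(P.erase p))

open Fin.NatCast in
/-- A `(60k)°` particle: a boundary particle, neither pending nor an articulation point,
whose occupied neighbours are exactly a consecutive arc `p + dᵢ, …, p + d_{i+k}`. -/
def ThetaParticle (P : Finset Node) (k : ℕ) (p : Node) : Prop :=
  BoundaryP P p ∧ ¬ Pending P p ∧ ¬ Articulation P p ∧
  ∃ i : Fin 6, ∀ d : Fin 6, (p + dirv d ∈ P ↔ ∃ j : ℕ, j ≤ k ∧ d = i + (j : Fin 6))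

/-! ## Auxiliary configuration surgery -/

/-- Change the state of the edge `{a,b}`: `s` is the new value of `a → b`, `t` of `b → a`. -/
def setEdge (c : Cfg) (a b : Node) (s t : Bool) : Cfg := fun x y =>
  if x = a ∧ y = b then s else if x = b ∧ y = a then t else c x y

/-- Restrict a configuration of `P` to the edges not incident to `p`. -/
def restrictCfg (c : Cfg) (p : Node) : Cfg := fun a b =>
  if a = p ∨ b = p then false else c a b

/-! ## Port labelings and views -/

/-- A port labeling: for each particle, a map from direction indices to port labels. -/
def PortLab : Type := Node → Fin 6 → Fin 6

/-- A valid port labeling: around each particle the labels are cyclically increasing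
(positive chirality) or cyclically decreasing (negative chirality). -/
def ValidLab (L : PortLab) : Prop :=
  ∀ p : Node, (∀ i, L p (i+1) = L p i + 1) ∨ (∀ i, L p (i+1) = L p i - 1)

/-- `p` has positive chirality under `L`. -/
def PosChirality (L : PortLab) (p : Node) : Prop := ∀ i, L p (i+1) = L p i + 1

/-- The direction index pointing from `a` to its neighbour `b`. -/
noncomputable def dirIdx (a b : Node) : Fin 6 :=
  if h : adj a b then (show ∃ i : Fin 6, b = a + dirv i from h).choose else 0

/-- The label of a path. -/
noncomputable def pathLabel (L : PortLab) : List Node → List (Fin 6 × Fin 6)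
  | a :: b :: rest => (L a (dirIdx a b), L b (dirIdx b a)) :: pathLabel L (b :: rest)
  | _ => []

/-- A path of length at most 3 starting at `p` in the graph induced on `P`. -/
def IsPathFrom (P : Finset Node) (p : Node) (l : List Node) : Prop :=
  l.head? = some p ∧ l.length ≤ 4 ∧ (∀ x ∈ l, x ∈ P) ∧ l.Chain' adj

/-- The view of depth 3 of `p`: the set of labels of paths of length at most 3 from `p`. -/
noncomputable def view3 (P : Finset Node) (L : PortLab) (p : Node) :
    Set (List (Fin 6 × Fin 6)) :=
  {s | ∃ l : List Node, IsPathFrom P p l ∧ pathLabel L l = s}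

/-! ## Auxiliary machinery for Statement 5: a discrete winding number argument -/

section Statement5Aux

lemma dirv_cases (i : Fin 6) :
    dirv i = ((1:ℤ),(0:ℤ)) ∨ dirv i = ((0:ℤ),(1:ℤ)) ∨ dirv i = ((-1:ℤ),(1:ℤ)) ∨
    dirv i = ((-1:ℤ),(0:ℤ)) ∨ dirv i = ((0:ℤ),(-1:ℤ)) ∨ dirv i = ((1:ℤ),(-1:ℤ)) := by
  fin_cases i <;> decide

/-- Horizontal coordinate in the standard embedding (doubled). -/
def Xc (v : Node) : ℤ := 2 * v.1 + v.2
/-- Vertical coordinate in the standard embedding. -/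
def Yc (v : Node) : ℤ := v.2

/-- Signed crossing of the directed segment `v → u` with the rightward horizontal
ray just above `z`. -/
def chi (z v u : Node) : ℤ :=
  if Yc v = Yc z ∧ Yc u = Yc z + 1 ∧ Xc z < Xc v then 1
  else if Yc u = Yc z ∧ Yc v = Yc z + 1 ∧ Xc z < Xc u then -1
  else 0

/-- Indicator of the strip region used when the observation point moves up. -/
def Jf (w v : Node) : ℤ := if Yc v = Yc w ∧ Xc w < Xc v then 1 else 0

lemma adj_comp {v u : Node} (h : adj v u) :
    (u.1 = v.1 + 1 ∧ u.2 = v.2) ∨ (u.1 = v.1 ∧ u.2 = v.2 + 1) ∨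
    (u.1 = v.1 - 1 ∧ u.2 = v.2 + 1) ∨ (u.1 = v.1 - 1 ∧ u.2 = v.2) ∨
    (u.1 = v.1 ∧ u.2 = v.2 - 1) ∨ (u.1 = v.1 + 1 ∧ u.2 = v.2 - 1) := by
  obtain ⟨i, rfl⟩ := h
  rcases dirv_cases i with h | h | h | h | h | h <;>
    rw [h] <;> simp [Prod.fst_add, Prod.snd_add] <;> omega

lemma ne_comp {v z : Node} (h : v ≠ z) : ¬ (v.1 = z.1 ∧ v.2 = z.2) := by
  intro hc; exact h (Prod.ext hc.1 hc.2)

set_option maxHeartbeats 1600000 in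
lemma chi_step_horiz {z z' v u : Node} (hz' : z'.1 = z.1 + 1 ∧ z'.2 = z.2)
    (h : adj v u) (hv : v ≠ z) (hv' : v ≠ z') (hu : u ≠ z) (hu' : u ≠ z') :
    chi z v u = chi z' v u := by
  have h6 := adj_comp h
  have hv1 := ne_comp hv; have hv2 := ne_comp hv'
  have hu1 := ne_comp hu; have hu2 := ne_comp hu'
  simp only [chi, Xc, Yc]
  obtain ⟨hz1, hz2⟩ := hz'
  rcases h6 with h6 | h6 | h6 | h6 | h6 | h6 <;> obtain ⟨h61, h62⟩ := h6 <;>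
    split_ifs <;> omega

set_option maxHeartbeats 1600000 in
lemma chi_step_up {z z' v u : Node}
    (hz' : (z'.1 = z.1 ∧ z'.2 = z.2 + 1) ∨ (z'.1 = z.1 - 1 ∧ z'.2 = z.2 + 1))
    (h : adj v u) (hv : v ≠ z) (hv' : v ≠ z') (hu : u ≠ z) (hu' : u ≠ z') :
    chi z v u - chi z' v u = Jf z' u - Jf z' v := by
  have h6 := adj_comp h
  have hv1 := ne_comp hv; have hv2 := ne_comp hv'
  have hu1 := ne_comp hu; have hu2 := ne_comp hu'
  simp only [chi, Jf, Xc, Yc]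
  rcases hz' with hz' | hz' <;> rcases h6 with h6 | h6 | h6 | h6 | h6 | h6 <;>
    obtain ⟨hz1, hz2⟩ := hz' <;> obtain ⟨h61, h62⟩ := h6 <;>
    split_ifs <;> omega

/-- Last element of a nonempty list given as head and tail. -/
def lastd : Node → List Node → Node
  | a, [] => a
  | _, v :: l => lastd v l

@[simp] lemma lastd_nil (a : Node) : lastd a [] = a := rfl
@[simp] lemma lastd_cons (a v : Node) (l : List Node) :
    lastd a (v :: l) = lastd v l := rfl

lemma lastd_snoc (l : List Node) (a c : Node) : lastd a (l ++ [c]) = c := by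
  induction l generalizing a with
  | nil => rfl
  | cons v l ih => rw [List.cons_append, lastd_cons]; exact ih v

/-- The winding sum of a path (given as head plus tail list) seen from `z`. -/
def Wd (z : Node) : Node → List Node → ℤ
  | _, [] => 0
  | a, v :: l => chi z a v + Wd z v l

@[simp] lemma Wd_nil (z a : Node) : Wd z a [] = 0 := rfl
@[simp] lemma Wd_cons (z a v : Node) (l : List Node) :
    Wd z a (v :: l) = chi z a v + Wd z v l := rfl

lemma Wd_snoc (z x : Node) (l : List Node) : ∀ a,
    Wd z a (l ++ [x]) = Wd z a l + chi z (lastd a l) x := by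
  induction l with
  | nil => intro a; simp [Wd]
  | cons v l ih =>
    intro a
    rw [List.cons_append, Wd_cons, ih v, Wd_cons, lastd_cons]
    ring

lemma Wd_diff (z z' : Node) (Φ : Node → ℤ)
    (hstep : ∀ v u, adj v u → v ≠ z → v ≠ z' → u ≠ z → u ≠ z' →
      chi z v u - chi z' v u = Φ u - Φ v) :
    ∀ (l : List Node) (a : Node), List.Chain adj a l →
      (∀ x ∈ a :: l, x ≠ z ∧ x ≠ z') →
      Wd z a l - Wd z' a l = Φ (lastd a l) - Φ a := by
  intro l
  induction l with
  | nil => intro a _ _; simp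
  | cons v l ih =>
    intro a hch hne
    rw [List.Chain, List.chain_cons] at hch
    have h1 := hstep a v hch.1 (hne a (by simp)).1 (hne a (by simp)).2
      (hne v (by simp)).1 (hne v (by simp)).2
    have h2 := ih v hch.2 (fun x hx => hne x (by
      rcases List.mem_cons.1 hx with h | h
      · simp [h]
      · exact List.mem_cons.2 (Or.inr (List.mem_cons.2 (Or.inr h)))))
    rw [Wd_cons, Wd_cons, lastd_cons]
    linarith

/-- Moving the observation point along a grid edge does not change the winding sum of
a closed walk avoiding both observation points. -/
lemma Wd_loop_move {z z' : Node} (hadj : adj z z') (a : Node) (l : List Node)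
    (hch : List.Chain adj a l) (hlast : lastd a l = a)
    (hne : ∀ x ∈ a :: l, x ≠ z ∧ x ≠ z') : Wd z a l = Wd z' a l := by
  have h6 := adj_comp hadj
  rcases h6 with h | h | h | h | h | h
  · have := Wd_diff z z' (fun _ => 0)
      (fun v u hvu h1 h2 h3 h4 => by
        rw [chi_step_horiz ⟨h.1, h.2⟩ hvu h1 h2 h3 h4]; ring) l a hch hne
    simp only [sub_self] at this
    linarith
  · have := Wd_diff z z' (Jf z')
      (fun v u hvu h1 h2 h3 h4 => chi_step_up (Or.inl h) hvu h1 h2 h3 h4) l a hch hne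
    rw [hlast] at this; omega
  · have := Wd_diff z z' (Jf z')
      (fun v u hvu h1 h2 h3 h4 => chi_step_up (Or.inr h) hvu h1 h2 h3 h4) l a hch hne
    rw [hlast] at this; omega
  · have := Wd_diff z z' (fun _ => 0)
      (fun v u hvu h1 h2 h3 h4 => by
        have := chi_step_horiz (z := z') (z' := z) ⟨by omega, by omega⟩ hvu h2 h1 h4 h3
        rw [this]; ring) l a hch hne
    simp only [sub_self] at this
    linarith
  · have := Wd_diff z z' (fun x => - Jf z x)
      (fun v u hvu h1 h2 h3 h4 => by
        have h5 := chi_step_up (z := z') (z' := z) (Or.inl ⟨by omega, by omega⟩) hvu h2 h1 h4 h3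
        show chi z v u - chi z' v u = -Jf z u - -Jf z v
        linarith) l a hch hne
    rw [hlast] at this; linarith
  · have := Wd_diff z z' (fun x => - Jf z x)
      (fun v u hvu h1 h2 h3 h4 => by
        have h5 := chi_step_up (z := z') (z' := z) (Or.inr ⟨by omega, by omega⟩) hvu h2 h1 h4 h3
        show chi z v u - chi z' v u = -Jf z u - -Jf z v
        linarith) l a hch hne
    rw [hlast] at this; linarith

lemma chain_snoc {R : Node → Node → Prop} :
    ∀ (l : List Node) (a c : Node),
      List.Chain R a l → R (lastd a l) c → List.Chain R a (l ++ [c]) := by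
  intro l
  induction l with
  | nil => intro a c _ h; exact List.Chain.cons h List.Chain.nil
  | cons v l ih =>
    intro a c hch h
    rw [List.Chain, List.chain_cons] at hch
    rw [List.cons_append, List.Chain, List.chain_cons]
    exact ⟨hch.1, ih v c hch.2 (by rw [lastd_cons] at h; exact h)⟩

lemma reach_to_chain {S : Set Node} {a b : Node} (h : reach S a b) :
    ∃ l : List Node,
      List.Chain (fun x y => x ∈ S ∧ y ∈ S ∧ adj x y) a l ∧ lastd a l = b := by
  induction h with
  | refl => exact ⟨[], List.Chain.nil, rfl⟩
  | tail h1 h2 ih =>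
    obtain ⟨l, hc, hl⟩ := ih
    exact ⟨l ++ [_], chain_snoc l _ _ hc (hl ▸ h2), lastd_snoc _ _ _⟩

lemma chain_forall {R : Node → Node → Prop} {S : Set Node}
    (hR : ∀ x y, R x y → y ∈ S) :
    ∀ (l : List Node) (a : Node), List.Chain R a l → a ∈ S → ∀ x ∈ a :: l, x ∈ S := by
  intro l
  induction l with
  | nil =>
    intro a _ ha x hx
    rcases List.mem_cons.1 hx with h | h
    · exact h ▸ ha
    · simp at h
  | cons v l ih =>
    intro a hch ha x hx
    rw [List.Chain, List.chain_cons] at hch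
    rcases List.mem_cons.1 hx with h | h
    · exact h ▸ ha
    · exact ih v hch.2 (hR a v hch.1) x h

end Statement5Aux

/-- every simply connected particle system with at least three particles and
no articulation point contains a 60° particle or a 120° particle. -/
theorem exists_60_or_120_particle
    (P : Finset Node) (hPS : IsParticleSystem P) (hSC : SimplyConnected P)
    (hcard : 3 ≤ P.card) (hart : ∀ p, ¬ Articulation P p) :
    ∃ p, ThetaParticle P 1 p ∨ ThetaParticle P 2 p := by
  classical
  obtain ⟨hne, hconn⟩ := hPS
  have d0 : dirv 0 = ((1:ℤ), (0:ℤ)) := by decide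
  have d1 : dirv 1 = ((0:ℤ), (1:ℤ)) := by decide
  have d2 : dirv 2 = ((-1:ℤ), (1:ℤ)) := by decide
  have d3 : dirv 3 = ((-1:ℤ), (0:ℤ)) := by decide
  have d4 : dirv 4 = ((0:ℤ), (-1:ℤ)) := by decide
  have d5 : dirv 5 = ((1:ℤ), (-1:ℤ)) := by decide
  have hdir_inj : ∀ d e : Fin 6, dirv d = dirv e → d = e := by decide
  -- the extremal particle p
  obtain ⟨p0, hp0, hmax0⟩ := P.exists_max_image (fun v => v.1 + v.2) hne
  obtain ⟨p, hpf, hmax1⟩ :=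
    (P.filter (fun v => v.1 + v.2 = p0.1 + p0.2)).exists_max_image (fun v => v.1)
      ⟨p0, Finset.mem_filter.2 ⟨hp0, rfl⟩⟩
  rw [Finset.mem_filter] at hpf
  obtain ⟨hp, hps0⟩ := hpf
  have hps : p.1 + p.2 = p0.1 + p0.2 := hps0
  have hsum : ∀ v ∈ P, v.1 + v.2 ≤ p.1 + p.2 := by
    intro v hv
    have h1 : v.1 + v.2 ≤ p0.1 + p0.2 := hmax0 v hv
    omega
  have hxmax : ∀ v ∈ P, v.1 + v.2 = p.1 + p.2 → v.1 ≤ p.1 := by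
    intro v hv hvs
    have h1 : v.1 ≤ p.1 := hmax1 v (Finset.mem_filter.2 ⟨hv, by omega⟩)
    exact h1
  have hf : p + ((1:ℤ), (0:ℤ)) ∉ P := by
    intro h
    have h1 := hsum _ h
    simp only [Prod.fst_add, Prod.snd_add] at h1
    omega
  have hg : p + ((0:ℤ), (1:ℤ)) ∉ P := by
    intro h
    have h1 := hsum _ h
    simp only [Prod.fst_add, Prod.snd_add] at h1
    omega
  have hh : p + ((1:ℤ), (-1:ℤ)) ∉ P := by
    intro h
    have h1 := hxmax _ h (by simp only [Prod.fst_add, Prod.snd_add]; ring)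
    simp only [Prod.fst_add] at h1
    omega
  -- any occupied neighbour of p is in one of the directions 2,3,4
  have hnbr : ∀ c, adj p c → c ∈ P →
      c = p + ((-1:ℤ),(1:ℤ)) ∨ c = p + ((-1:ℤ),(0:ℤ)) ∨ c = p + ((0:ℤ),(-1:ℤ)) := by
    rintro c ⟨i, rfl⟩ hc
    rcases dirv_cases i with h | h | h | h | h | h <;> rw [h] at hc ⊢
    · exact absurd hc hf
    · exact absurd hc hg
    · tauto
    · tauto
    · tauto
    · exact absurd hc hh
  have hnep : ∀ (w : Node), w.1 ≠ 0 ∨ w.2 ≠ 0 → p + w ≠ p := by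
    intro w hw h
    rw [Prod.ext_iff] at h
    simp only [Prod.fst_add, Prod.snd_add] at h
    omega
  have hstep1 : ∀ (S : Set Node) (b : Node), reach S p b → p ≠ b →
      ∃ c, c ∈ S ∧ adj p c := by
    intro S b hr hpb
    rcases Relation.ReflTransGen.cases_head hr with h | ⟨c, ⟨_, hcS, hadj⟩, _⟩
    · exact absurd h hpb
    · exact ⟨c, hcS, hadj⟩
  have hextra : ∀ w : Node, ∃ b ∈ P, b ≠ p ∧ b ≠ w := by
    intro w
    have h1 : P.card - 1 ≤ (P.erase w).card := Finset.pred_card_le_card_erase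
    have h2 : (P.erase w).card - 1 ≤ ((P.erase w).erase p).card :=
      Finset.pred_card_le_card_erase
    have h3 : 0 < ((P.erase w).erase p).card := by omega
    obtain ⟨b, hb⟩ := Finset.card_pos.1 h3
    rw [Finset.mem_erase, Finset.mem_erase] at hb
    exact ⟨b, hb.2.2, hb.1, hb.2.1⟩
  -- p cannot have exactly one occupied neighbour
  have honly : ∀ w : Node,
      (w = p + ((-1:ℤ),(1:ℤ)) ∨ w = p + ((-1:ℤ),(0:ℤ)) ∨ w = p + ((0:ℤ),(-1:ℤ))) →
      w ∈ P → (∀ c, adj p c → c ∈ P → c = w) → False := by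
    intro w hwd hwP huniq
    obtain ⟨b, hbP, hbp, hbw⟩ := hextra w
    have hwne : w ≠ p := by
      rcases hwd with h | h | h <;> subst h <;> exact hnep _ (by norm_num)
    have hcw : ConnectedOn ↑(P.erase w) := by
      by_contra hc; exact hart w ⟨hwP, hc⟩
    have hpmem : p ∈ (↑(P.erase w) : Set Node) := by
      simp only [Finset.coe_erase, Set.mem_diff, Set.mem_singleton_iff]
      exact ⟨hp, Ne.symm hwne⟩
    have hbmem : b ∈ (↑(P.erase w) : Set Node) := by
      simp only [Finset.coe_erase, Set.mem_diff, Set.mem_singleton_iff]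
      exact ⟨hbP, hbw⟩
    obtain ⟨c, hcS, hadj⟩ := hstep1 _ b (hcw p hpmem b hbmem) (Ne.symm hbp)
    simp only [Finset.coe_erase, Set.mem_diff, Set.mem_singleton_iff] at hcS
    exact hcS.2 (huniq c hadj hcS.1)
  by_cases o2 : p + ((-1:ℤ),(1:ℤ)) ∈ P <;>
    by_cases o3 : p + ((-1:ℤ),(0:ℤ)) ∈ P <;>
      by_cases o4 : p + ((0:ℤ),(-1:ℤ)) ∈ P
  -- case TTT : 120° particle
  · refine ⟨p, Or.inr ⟨⟨hp, ⟨0, by simpa only [d0] using hf⟩⟩, ?_, hart p, ⟨2, ?_⟩⟩⟩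
    · rintro ⟨-, d, hd, hu⟩
      have h2 := hu 2 (by simpa only [d2] using o2)
      have h3 := hu 3 (by simpa only [d3] using o3)
      exact absurd (h2.trans h3.symm) (by decide)
    · intro d
      constructor
      · intro hd
        rcases hnbr (p + dirv d) ⟨d, rfl⟩ hd with h | h | h
        · have hd2 : d = 2 := hdir_inj d 2 (by rw [d2]; exact add_left_cancel h)
          exact ⟨0, by norm_num, by rw [hd2]; decide⟩
        · have hd3 : d = 3 := hdir_inj d 3 (by rw [d3]; exact add_left_cancel h)
          exact ⟨1, by norm_num, by rw [hd3]; decide⟩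
        · have hd4 : d = 4 := hdir_inj d 4 (by rw [d4]; exact add_left_cancel h)
          exact ⟨2, le_refl 2, by rw [hd4]; decide⟩
      · rintro ⟨j, hj, rfl⟩
        interval_cases j
        · rw [(open Fin.NatCast in show ((2:Fin 6) + ((0:ℕ):Fin 6)) = 2 by decide), d2]; exact o2
        · rw [(open Fin.NatCast in show ((2:Fin 6) + ((1:ℕ):Fin 6)) = 3 by decide), d3]; exact o3
        · rw [(open Fin.NatCast in show ((2:Fin 6) + ((2:ℕ):Fin 6)) = 4 by decide), d4]; exact o4
  -- case TTF : 60° particle at i = 2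
  · refine ⟨p, Or.inl ⟨⟨hp, ⟨0, by simpa only [d0] using hf⟩⟩, ?_, hart p, ⟨2, ?_⟩⟩⟩
    · rintro ⟨-, d, hd, hu⟩
      have h2 := hu 2 (by simpa only [d2] using o2)
      have h3 := hu 3 (by simpa only [d3] using o3)
      exact absurd (h2.trans h3.symm) (by decide)
    · intro d
      constructor
      · intro hd
        rcases hnbr (p + dirv d) ⟨d, rfl⟩ hd with h | h | h
        · have hd2 : d = 2 := hdir_inj d 2 (by rw [d2]; exact add_left_cancel h)
          exact ⟨0, by norm_num, by rw [hd2]; decide⟩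
        · have hd3 : d = 3 := hdir_inj d 3 (by rw [d3]; exact add_left_cancel h)
          exact ⟨1, by norm_num, by rw [hd3]; decide⟩
        · rw [h] at hd; exact absurd hd o4
      · rintro ⟨j, hj, rfl⟩
        interval_cases j
        · rw [(open Fin.NatCast in show ((2:Fin 6) + ((0:ℕ):Fin 6)) = 2 by decide), d2]; exact o2
        · rw [(open Fin.NatCast in show ((2:Fin 6) + ((1:ℕ):Fin 6)) = 3 by decide), d3]; exact o3
  -- case TFT : impossible, by the winding number argument
  · exfalso
    have hqne : p + ((-1:ℤ),(1:ℤ)) ≠ p := hnep _ (by norm_num)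
    have hrne : p + ((0:ℤ),(-1:ℤ)) ≠ p := hnep _ (by norm_num)
    have hconnE : ConnectedOn ↑(P.erase p) := by
      by_contra hc; exact hart p ⟨hp, hc⟩
    have hqmem : (p + ((-1:ℤ),(1:ℤ))) ∈ (↑(P.erase p) : Set Node) := by
      simp only [Finset.coe_erase, Set.mem_diff, Set.mem_singleton_iff]
      exact ⟨o2, hqne⟩
    have hrmem : (p + ((0:ℤ),(-1:ℤ))) ∈ (↑(P.erase p) : Set Node) := by
      simp only [Finset.coe_erase, Set.mem_diff, Set.mem_singleton_iff]
      exact ⟨o4, hrne⟩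
    obtain ⟨lA, hchA0, hlastA⟩ :=
      reach_to_chain (hconnE _ hqmem _ hrmem)
    have hchA : List.Chain adj (p + ((-1:ℤ),(1:ℤ))) lA :=
      List.Chain.imp (fun a b h => h.2.2) hchA0
    have hAmem : ∀ x ∈ (p + ((-1:ℤ),(1:ℤ))) :: lA, x ∈ (↑(P.erase p) : Set Node) :=
      chain_forall (fun x y h => h.2.1) lA _ hchA0 hqmem
    have hAne : ∀ x ∈ (p + ((-1:ℤ),(1:ℤ))) :: lA, x ∈ P ∧ x ≠ p := by
      intro x hx
      have h1 := hAmem x hx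
      simp only [Finset.coe_erase, Set.mem_diff, Set.mem_singleton_iff] at h1
      exact h1
    obtain ⟨lB, hchB, hlastB⟩ :=
      reach_to_chain (hSC (p + ((-1:ℤ),(0:ℤ))) o3 (p + ((1:ℤ),(0:ℤ))) hf)
    -- the closed loop L : q → … → r → p → q
    set L : List Node := (lA ++ [p]) ++ [p + ((-1:ℤ),(1:ℤ))] with hLdef
    have hadj_rp : adj (p + ((0:ℤ),(-1:ℤ))) p := by
      refine ⟨1, ?_⟩
      rw [d1, Prod.ext_iff]
      simp only [Prod.fst_add, Prod.snd_add]
      constructor <;> ring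
    have hadj_pq : adj p (p + ((-1:ℤ),(1:ℤ))) := ⟨2, by rw [d2]⟩
    have hch1 : List.Chain adj (p + ((-1:ℤ),(1:ℤ))) (lA ++ [p]) :=
      chain_snoc lA _ p hchA (by rw [hlastA]; exact hadj_rp)
    have hchL : List.Chain adj (p + ((-1:ℤ),(1:ℤ))) L :=
      chain_snoc _ _ _ hch1 (by rw [lastd_snoc]; exact hadj_pq)
    have hlastL : lastd (p + ((-1:ℤ),(1:ℤ))) L = p + ((-1:ℤ),(1:ℤ)) :=
      lastd_snoc _ _ _
    have hCP : ∀ x ∈ (p + ((-1:ℤ),(1:ℤ))) :: L, x ∈ P := by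
      intro x hx
      rcases List.mem_cons.1 hx with h | h
      · rw [h]; exact o2
      · rw [hLdef] at h
        simp only [List.mem_append, List.mem_singleton] at h
        rcases h with (h | h) | h
        · exact (hAne x (List.mem_cons.2 (Or.inr h))).1
        · rw [h]; exact hp
        · rw [h]; exact o2
    -- winding sum is conserved along the empty path from m to f
    have hBcons : ∀ (l : List Node) (a : Node),
        List.Chain (fun x y => x ∈ {v : Node | v ∉ P} ∧ y ∈ {v : Node | v ∉ P} ∧ adj x y) a l →
        a ∉ P →
        Wd a (p + ((-1:ℤ),(1:ℤ))) L = Wd (lastd a l) (p + ((-1:ℤ),(1:ℤ))) L := by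
      intro l
      induction l with
      | nil => intro a _ _; rfl
      | cons c l ih =>
        intro a hch ha
        rw [List.Chain, List.chain_cons] at hch
        obtain ⟨⟨-, hc, hadj⟩, hch'⟩ := hch
        have hcnp : c ∉ P := hc
        have h1 : Wd a (p + ((-1:ℤ),(1:ℤ))) L = Wd c (p + ((-1:ℤ),(1:ℤ))) L := by
          refine Wd_loop_move hadj _ L hchL hlastL ?_
          intro x hx
          constructor
          · intro hxa; exact ha (hxa ▸ hCP x hx)
          · intro hxc; exact hcnp (hxc ▸ hCP x hx)
        rw [h1, lastd_cons]
        exact ih c hch' hcnp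
    have hWmf : Wd (p + ((-1:ℤ),(0:ℤ))) (p + ((-1:ℤ),(1:ℤ))) L
        = Wd (p + ((1:ℤ),(0:ℤ))) (p + ((-1:ℤ),(1:ℤ))) L := by
      have h1 := hBcons lB _ hchB o3
      rwa [hlastB] at h1
    -- decompose the winding sum of the loop
    have hWsnoc : ∀ z, Wd z (p + ((-1:ℤ),(1:ℤ))) L
        = Wd z (p + ((-1:ℤ),(1:ℤ))) lA
          + chi z (p + ((0:ℤ),(-1:ℤ))) p + chi z p (p + ((-1:ℤ),(1:ℤ))) := by
      intro z
      rw [hLdef, Wd_snoc, Wd_snoc, hlastA, lastd_snoc]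
    -- the two horizontal moves m → p → f outside the open path lA
    have hAx : ∀ x ∈ (p + ((-1:ℤ),(1:ℤ))) :: lA,
        x ≠ p + ((-1:ℤ),(0:ℤ)) ∧ x ≠ p ∧ x ≠ p + ((1:ℤ),(0:ℤ)) := by
      intro x hx
      obtain ⟨hxP, hxp⟩ := hAne x hx
      refine ⟨?_, hxp, ?_⟩
      · intro h; exact o3 (h ▸ hxP)
      · intro h; exact hf (h ▸ hxP)
    have hhorizmp : Wd (p + ((-1:ℤ),(0:ℤ))) (p + ((-1:ℤ),(1:ℤ))) lA
        = Wd p (p + ((-1:ℤ),(1:ℤ))) lA := by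
      have h1 := Wd_diff (p + ((-1:ℤ),(0:ℤ))) p (fun _ => 0)
        (fun v u hvu h1 h2 h3 h4 => by
          rw [chi_step_horiz ?_ hvu h1 h2 h3 h4]
          · ring
          · simp only [Prod.fst_add, Prod.snd_add]
            constructor <;> ring)
        lA _ hchA (fun x hx => ⟨(hAx x hx).1, (hAx x hx).2.1⟩)
      simp only [sub_self] at h1
      linarith
    have hhorizpf : Wd p (p + ((-1:ℤ),(1:ℤ))) lA
        = Wd (p + ((1:ℤ),(0:ℤ))) (p + ((-1:ℤ),(1:ℤ))) lA := by
      have h1 := Wd_diff p (p + ((1:ℤ),(0:ℤ))) (fun _ => 0)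
        (fun v u hvu h1 h2 h3 h4 => by
          rw [chi_step_horiz ?_ hvu h1 h2 h3 h4]
          · ring
          · simp only [Prod.fst_add, Prod.snd_add]
            constructor <;> simp)
        lA _ hchA (fun x hx => ⟨(hAx x hx).2.1, (hAx x hx).2.2⟩)
      simp only [sub_self] at h1
      linarith
    -- explicit local crossing numbers
    have c1 : chi (p + ((-1:ℤ),(0:ℤ))) (p + ((0:ℤ),(-1:ℤ))) p = 0 := by
      simp only [chi, Xc, Yc, Prod.fst_add, Prod.snd_add]
      split_ifs <;> omega
    have c2 : chi (p + ((-1:ℤ),(0:ℤ))) p (p + ((-1:ℤ),(1:ℤ))) = 1 := by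
      simp only [chi, Xc, Yc, Prod.fst_add, Prod.snd_add]
      split_ifs <;> omega
    have c3 : chi (p + ((1:ℤ),(0:ℤ))) (p + ((0:ℤ),(-1:ℤ))) p = 0 := by
      simp only [chi, Xc, Yc, Prod.fst_add, Prod.snd_add]
      split_ifs <;> omega
    have c4 : chi (p + ((1:ℤ),(0:ℤ))) p (p + ((-1:ℤ),(1:ℤ))) = 0 := by
      simp only [chi, Xc, Yc, Prod.fst_add, Prod.snd_add]
      split_ifs <;> omega
    have e_m := hWsnoc (p + ((-1:ℤ),(0:ℤ)))
    have e_f := hWsnoc (p + ((1:ℤ),(0:ℤ)))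
    rw [c1, c2] at e_m
    rw [c3, c4] at e_f
    rw [e_m, e_f, hhorizmp, hhorizpf] at hWmf
    omega
  -- case TFF : pending, impossible
  · exact (honly _ (Or.inl rfl) o2 (fun c hc hcP => by
      rcases hnbr c hc hcP with h | h | h
      · exact h
      · rw [h] at hcP; exact absurd hcP o3
      · rw [h] at hcP; exact absurd hcP o4)).elim
  -- case FTT : 60° particle at i = 3
  · refine ⟨p, Or.inl ⟨⟨hp, ⟨0, by simpa only [d0] using hf⟩⟩, ?_, hart p, ⟨3, ?_⟩⟩⟩
    · rintro ⟨-, d, hd, hu⟩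
      have h3 := hu 3 (by simpa only [d3] using o3)
      have h4 := hu 4 (by simpa only [d4] using o4)
      exact absurd (h3.trans h4.symm) (by decide)
    · intro d
      constructor
      · intro hd
        rcases hnbr (p + dirv d) ⟨d, rfl⟩ hd with h | h | h
        · rw [h] at hd; exact absurd hd o2
        · have hd3 : d = 3 := hdir_inj d 3 (by rw [d3]; exact add_left_cancel h)
          exact ⟨0, by norm_num, by rw [hd3]; decide⟩
        · have hd4 : d = 4 := hdir_inj d 4 (by rw [d4]; exact add_left_cancel h)
          exact ⟨1, by norm_num, by rw [hd4]; decide⟩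
      · rintro ⟨j, hj, rfl⟩
        interval_cases j
        · rw [(open Fin.NatCast in show ((3:Fin 6) + ((0:ℕ):Fin 6)) = 3 by decide), d3]; exact o3
        · rw [(open Fin.NatCast in show ((3:Fin 6) + ((1:ℕ):Fin 6)) = 4 by decide), d4]; exact o4
  -- case FTF : pending, impossible
  · exact (honly _ (Or.inr (Or.inl rfl)) o3 (fun c hc hcP => by
      rcases hnbr c hc hcP with h | h | h
      · rw [h] at hcP; exact absurd hcP o2
      · exact h
      · rw [h] at hcP; exact absurd hcP o4)).elim
  -- case FFT : pending, impossible
  · exact (honly _ (Or.inr (Or.inr rfl)) o4 (fun c hc hcP => by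
      rcases hnbr c hc hcP with h | h | h
      · rw [h] at hcP; exact absurd hcP o2
      · rw [h] at hcP; exact absurd hcP o3
      · exact h)).elim
  -- case FFF : isolated, impossible
  · exfalso
    obtain ⟨b, hbP, hbp, -⟩ := hextra p
    obtain ⟨c, hcS, hadj⟩ :=
      hstep1 _ b (hconn p (Finset.mem_coe.2 hp) b (Finset.mem_coe.2 hbP)) (Ne.symm hbp)
    rcases hnbr c hadj (Finset.mem_coe.1 hcS) with h | h | h <;> rw [h] at hcS
    · exact o2 (Finset.mem_coe.1 hcS)
    · exact o3 (Finset.mem_coe.1 hcS)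
    · exact o4 (Finset.mem_coe.1 hcS)
end

section
/- Let P be a simply connected particle system on the triangular grid, c a configuration of P and p a particle activable in c. Then R2, R3 and R4 hold at p in step(c,p); moreover, for every particle q ≠ p such that R2, R3 and R4 hold at q in c, R2, R3 and R4 also hold at q in step(c,p). Consequently, along any sequential execution c₀, c₁, …, the number of particles at which at least one of R2, R3, R4 fails in c_i is non-increasing in i. -/
lemma orientOut_ne {P : Finset Node} {c : Cfg} {p a : Node} (b : Node) (h : a ≠ p) :
    orientOut P c p a b = c a b := by simp [orientOut, h]

lemma clearOut_ne {c : Cfg} {p a : Node} (b : Node) (h : a ≠ p) :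
    clearOut c p a b = c a b := by simp [clearOut, h]

lemma clearOut_imp {c : Cfg} {p a b : Node} (h : clearOut c p a b = true) : c a b = true := by
  by_cases hap : a = p
  · simp [clearOut, hap] at h
  · rwa [clearOut_ne b hap] at h

lemma R2_clear (P : Finset Node) (c : Cfg) (p : Node) : R2 P (clearOut c p) p := by
  have h : (Finset.univ.filter
      (fun d : Fin 6 => p + dirv d ∈ P ∧ clearOut c p p (p + dirv d) = true)) = ∅ := by
    ext d; simp [clearOut]
  rw [R2, h]; simp

lemma R3_clear (P : Finset Node) (c : Cfg) (p : Node) : R3 P (clearOut c p) p := by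
  refine ⟨0, 0, ?_⟩
  ext d; simp [outSet, clearOut]

lemma R4_clear (P : Finset Node) (c : Cfg) (p : Node) : R4 P (clearOut c p) p := by
  rintro ⟨q, r, _, _, _, _, _, hpq, _, _⟩
  simp [clearOut] at hpq

lemma R2_pres {P : Finset Node} {c c' : Cfg} {q : Node} (h : ∀ x, c' q x = c q x) :
    R2 P c q → R2 P c' q := by
  intro h2
  have heq : (Finset.univ.filter fun d : Fin 6 => q + dirv d ∈ P ∧ c' q (q + dirv d) = true)
      = (Finset.univ.filter fun d : Fin 6 => q + dirv d ∈ P ∧ c q (q + dirv d) = true) := by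
    apply Finset.filter_congr; intro d _; rw [h]
  rw [R2, heq]; exact h2

lemma R3_pres {P : Finset Node} {c c' : Cfg} {q : Node} (h : ∀ x, c' q x = c q x) :
    R3 P c q → R3 P c' q := by
  have heq : outSet P c' q = outSet P c q := by ext d; simp [outSet, h]
  intro h3; rw [R3, heq]; exact h3

lemma R4_orient {P : Finset Node} {c : Cfg} {p q : Node} (hqP : q ∈ P) (hqp : q ≠ p)
    (hp4 : R4 P (orientOut P c p) p) (h4 : R4 P c q) : R4 P (orientOut P c p) q := by
  rintro ⟨r, s, hr, hs, hqr, hrs, hsq, e1, e2, e3⟩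
  by_cases hrp : r = p
  · subst hrp
    exact hp4 ⟨s, q, hs, hqP, hrs, hsq, hqr, e2, e3, e1⟩
  · by_cases hsp : s = p
    · subst hsp
      exact hp4 ⟨q, r, hqP, hr, hsq, hqr, hrs, e3, e1, e2⟩
    · rw [orientOut_ne r hqp] at e1
      rw [orientOut_ne s hrp] at e2
      rw [orientOut_ne q hsp] at e3
      exact h4 ⟨r, s, hr, hs, hqr, hrs, hsq, e1, e2, e3⟩

lemma step_key (P : Finset Node) (c : Cfg) (p : Node) :
    (R2 P (step P c p) p ∧ R3 P (step P c p) p ∧ R4 P (step P c p) p) ∧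
    (∀ q ∈ P, q ≠ p → (R2 P c q ∧ R3 P c q ∧ R4 P c q) →
      R2 P (step P c p) q ∧ R3 P (step P c p) q ∧ R4 P (step P c p) q) := by
  by_cases hC : R2 P (orientOut P c p) p ∧ R3 P (orientOut P c p) p ∧ R4 P (orientOut P c p) p
  · rw [step, if_pos hC]
    refine ⟨hC, ?_⟩
    rintro q hqP hqp ⟨h2, h3, h4⟩
    have heq : ∀ x, orientOut P c p q x = c q x := fun x => orientOut_ne x hqp
    exact ⟨R2_pres heq h2, R3_pres heq h3, R4_orient hqP hqp hC.2.2 h4⟩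
  · rw [step, if_neg hC]
    refine ⟨⟨R2_clear P c p, R3_clear P c p, R4_clear P c p⟩, ?_⟩
    rintro q hqP hqp ⟨h2, h3, h4⟩
    have heq : ∀ x, clearOut c p q x = c q x := fun x => clearOut_ne x hqp
    refine ⟨R2_pres heq h2, R3_pres heq h3, ?_⟩
    rintro ⟨r, s, hr, hs, h1, h2', h3', e1, e2, e3⟩
    exact h4 ⟨r, s, hr, hs, h1, h2', h3', clearOut_imp e1, clearOut_imp e2, clearOut_imp e3⟩

/-- activating an activable particle `p` establishes R2, R3, R4 at `p`,
preserves them at every other particle which satisfied them, and consequently the number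
of particles violating some of R2, R3, R4 is non-increasing along sequential executions. -/
theorem rules_monotone
    (P : Finset Node) (hPS : IsParticleSystem P) (hSC : SimplyConnected P) :
    (∀ c : Cfg, ConfigWF P c → ∀ p ∈ P, Activable P c p →
      (R2 P (step P c p) p ∧ R3 P (step P c p) p ∧ R4 P (step P c p) p) ∧
      (∀ q ∈ P, q ≠ p → (R2 P c q ∧ R3 P c q ∧ R4 P c q) →
        R2 P (step P c p) q ∧ R3 P (step P c p) q ∧ R4 P (step P c p) q)) ∧
    (∀ e : ℕ → Cfg, SeqExec P e → ∀ i : ℕ,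
      {q | q ∈ P ∧ ¬ (R2 P (e (i+1)) q ∧ R3 P (e (i+1)) q ∧ R4 P (e (i+1)) q)}.ncard ≤
      {q | q ∈ P ∧ ¬ (R2 P (e i) q ∧ R3 P (e i) q ∧ R4 P (e i) q)}.ncard) := by
  constructor
  · intro c _ p _ _
    exact step_key P c p
  · intro e hexec i
    rcases hexec.2 i with ⟨p, _, _, hstep⟩ | ⟨_, hstep⟩
    · have key := step_key P (e i) p
      apply Set.ncard_le_ncard ?_ ((P.finite_toSet).subset (fun q hq => hq.1))
      rintro q ⟨hqP, hviol⟩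
      refine ⟨hqP, fun hsat => ?_⟩
      by_cases hqp : q = p
      · subst hqp
        rw [hstep] at hviol
        exact hviol key.1
      · rw [hstep] at hviol
        exact hviol (key.2 q hqP hqp hsat)
    · rw [hstep]
end

section
/- Let P be a simply connected particle system on the triangular grid, let c₀, c₁, … be a Gouda-fair sequential execution on P, and let i₀ be an index such that every configuration c_i with i ≥ i₀ occurs infinitely often in the execution. Then for every i ≥ i₀, rules R2, R3 and R4 hold at every particle in c_i. -/
/-! ### Auxiliary lemmas for Statement 8 -/

/-- A step at `s` does not change edges whose source is not `s`. -/
lemma step_eq_of_ne (P : Finset Node) (c : Cfg) (s : Node) {a : Node} (hne : a ≠ s)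
    (b : Node) : step P c s a b = c a b := by
  unfold step
  split <;> simp [orientOut, clearOut, hne]

/-- After a step at `p`, rules R2, R3, R4 hold at `p`. -/
lemma rules_after_step (P : Finset Node) (c : Cfg) (p : Node) :
    R2 P (step P c p) p ∧ R3 P (step P c p) p ∧ R4 P (step P c p) p := by
  unfold step
  split
  · assumption
  · refine ⟨?_, ⟨0, 0, ?_⟩, ?_⟩
    · simp [R2, clearOut]
    · ext d; simp [outSet, clearOut]
    · rintro ⟨q, r, _, _, _, _, _, hpq, _, _⟩
      simp [clearOut] at hpq

/-- R2 and R3 at `p` depend only on the edges going out from `p`. -/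
lemma R23_congr (P : Finset Node) {c c' : Cfg} (p : Node) (h : ∀ b, c p b = c' p b) :
    (R2 P c p ∧ R3 P c p) ↔ (R2 P c' p ∧ R3 P c' p) := by
  unfold R2 R3 ConsecutiveSet outSet
  simp only [h]

def HasCyc (c : Cfg) (p q r : Node) : Prop :=
  c p q = true ∧ c q r = true ∧ c r p = true

lemma noCyc_after_step (P : Finset Node) (c : Cfg) (p q r : Node)
    (hq : q ∈ P) (hr : r ∈ P) (hpq : adj p q) (hqr : adj q r) (hrp : adj r p) :
    ¬ HasCyc (step P c p) p q r := by
  rintro ⟨h1, h2, h3⟩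
  unfold step at h1 h2 h3
  by_cases hcond : R2 P (orientOut P c p) p ∧ R3 P (orientOut P c p) p ∧
      R4 P (orientOut P c p) p
  · rw [if_pos hcond] at h1 h2 h3
    exact hcond.2.2 ⟨q, r, hq, hr, hpq, hqr, hrp, h1, h2, h3⟩
  · rw [if_neg hcond] at h1
    simp [clearOut] at h1

/-- ¬(R2 ∧ R3) at `p` propagates backwards along an execution. -/
lemma badR23_back (P : Finset Node) (e : ℕ → Cfg) (hexec : SeqExec P e) (p : Node)
    (j : ℕ) (h : ¬ (R2 P (e (j+1)) p ∧ R3 P (e (j+1)) p)) :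
    ¬ (R2 P (e j) p ∧ R3 P (e j) p) := by
  rcases hexec.2 j with ⟨s, _, _, hstep⟩ | ⟨_, hstep⟩
  · by_cases hsp : s = p
    · subst hsp
      exact absurd ⟨(rules_after_step P (e j) s).1, (rules_after_step P (e j) s).2.1⟩
        (hstep ▸ h)
    · have hb : ∀ b, e (j+1) p b = e j p b := fun b => by
        rw [hstep]; exact step_eq_of_ne P (e j) s (fun hps => hsp hps.symm) b
      exact fun hc => h ((R23_congr P p hb).mpr hc)
  · rwa [hstep] at h

/-- Directed 3-cycles propagate backwards along an execution. -/
lemma cyc_back (P : Finset Node) (e : ℕ → Cfg) (hexec : SeqExec P e) (p q r : Node)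
    (hp : p ∈ P) (hq : q ∈ P) (hr : r ∈ P)
    (hpq : adj p q) (hqr : adj q r) (hrp : adj r p)
    (j : ℕ) (h : HasCyc (e (j+1)) p q r) : HasCyc (e j) p q r := by
  rcases hexec.2 j with ⟨s, _, _, hstep⟩ | ⟨_, hstep⟩
  · rw [hstep] at h
    by_cases hsp : s = p
    · subst hsp; exact absurd h (noCyc_after_step P (e j) s q r hq hr hpq hqr hrp)
    by_cases hsq : s = q
    · subst hsq
      exact absurd ⟨h.2.1, h.2.2, h.1⟩
        (noCyc_after_step P (e j) s r p hr hp hqr hrp hpq)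
    by_cases hsr : s = r
    · subst hsr
      exact absurd ⟨h.2.2, h.1, h.2.1⟩
        (noCyc_after_step P (e j) s p q hp hq hrp hpq hqr)
    · refine ⟨?_, ?_, ?_⟩
      · rw [← step_eq_of_ne P (e j) s (fun hh => hsp hh.symm) q]; exact h.1
      · rw [← step_eq_of_ne P (e j) s (fun hh => hsq hh.symm) r]; exact h.2.1
      · rw [← step_eq_of_ne P (e j) s (fun hh => hsr hh.symm) p]; exact h.2.2
  · rwa [hstep] at h

/-- Backward propagation over many steps. -/
lemma back_many (e : ℕ → Cfg) {Q : Cfg → Prop}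
    (hback : ∀ j, Q (e (j+1)) → Q (e j)) :
    ∀ j n, Q (e (j + n)) → Q (e j) := by
  intro j n
  induction n with
  | zero => simp
  | succ n ih =>
    intro h
    exact ih (hback (j + n) h)

/-- in the recurrent suffix of a Gouda-fair sequential execution, rules
R2, R3 and R4 hold at every particle in every configuration. -/
theorem rules_hold_in_recurrent_suffix
    (P : Finset Node) (hPS : IsParticleSystem P) (hSC : SimplyConnected P)
    (e : ℕ → Cfg) (hexec : SeqExec P e) (hfair : GoudaFair P e)
    (i0 : ℕ) (hrec : ∀ i, i0 ≤ i → InfOften e (e i)) :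
    ∀ i, i0 ≤ i → ∀ p ∈ P, R2 P (e i) p ∧ R3 P (e i) p ∧ R4 P (e i) p := by
  intro i hi p hp
  by_contra hbad
  by_cases h23 : R2 P (e i) p ∧ R3 P (e i) p
  · -- then R4 fails at p
    have hR4 : ¬ R4 P (e i) p := fun h4 => hbad ⟨h23.1, h23.2, h4⟩
    unfold R4 at hR4
    rw [not_not] at hR4
    obtain ⟨q, r, hq, hr, hpq, hqr, hrp, h1, h2, h3⟩ := hR4
    have hcyc : HasCyc (e i) p q r := ⟨h1, h2, h3⟩
    -- p is activable
    have hact : Activable P (e i) p := by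
      intro heq
      apply noCyc_after_step P (e i) p q r hq hr hpq hqr hrp
      rw [heq]; exact hcyc
    have hio : InfOften e (step P (e i) p) := hfair (e i) (hrec i hi) p hp hact
    obtain ⟨j, _, hj⟩ := hio 0
    obtain ⟨j', hjj', hj'⟩ := hrec i hi j
    have hcyc' : HasCyc (e j') p q r := by rw [hj']; exact hcyc
    have : HasCyc (e j) p q r := by
      have := back_many e (Q := fun c => HasCyc c p q r)
        (fun m => cyc_back P e hexec p q r hp hq hr hpq hqr hrp m) j (j' - j)
      rw [Nat.add_sub_cancel' hjj'] at this
      exact this hcyc'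
    rw [hj] at this
    exact noCyc_after_step P (e i) p q r hq hr hpq hqr hrp this
  · -- R2 or R3 fails at p
    have hact : Activable P (e i) p := by
      intro heq
      apply h23
      rw [← heq]
      exact ⟨(rules_after_step P (e i) p).1, (rules_after_step P (e i) p).2.1⟩
    have hio : InfOften e (step P (e i) p) := hfair (e i) (hrec i hi) p hp hact
    obtain ⟨j, _, hj⟩ := hio 0
    obtain ⟨j', hjj', hj'⟩ := hrec i hi j
    have hbad' : ¬ (R2 P (e j') p ∧ R3 P (e j') p) := by rw [hj']; exact h23
    have : ¬ (R2 P (e j) p ∧ R3 P (e j) p) := by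
      have := back_many e (Q := fun c => ¬ (R2 P c p ∧ R3 P c p))
        (fun m => badR23_back P e hexec p m) j (j' - j)
      rw [Nat.add_sub_cancel' hjj'] at this
      exact this hbad'
    rw [hj] at this
    exact this ⟨(rules_after_step P (e i) p).1, (rules_after_step P (e i) p).2.1⟩
end

section
/- Let P be a particle system on the triangular grid, let c be a configuration of P satisfying R3 at a particle p, and let d, d' ∈ D be consecutive directions in the cyclic order d₀,…,d₅ such that in c the direction d is incoming at p with p + d ∈ P, and the direction d' is outgoing at p. Then the configuration obtained from c by changing the state of the edge {p, p+d} to directed p→(p+d) still satisfies R3 at p, and likewise the configuration obtained from c by changing the state of the edge {p, p+d'} to directed (p+d')→p still satisfies R3 at p. -/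
/-! ### Auxiliary machinery for Statement 11 -/

open Fin.NatCast in
def arcF (i : Fin 6) (k : Fin 7) : Finset (Fin 6) :=
  Finset.univ.filter (fun e => ∃ j : Fin 6, (j : ℕ) < (k : ℕ) ∧ e = i + ((j : ℕ) : Fin 6))

def consF (S : Finset (Fin 6)) : Prop := ∃ i : Fin 6, ∃ k : Fin 7, S = arcF i k

instance : DecidablePred consF := by unfold consF; infer_instance

open Fin.NatCast in
lemma consF_iff (S : Finset (Fin 6)) : ConsecutiveSet (↑S) ↔ consF S := by
  constructor
  · rintro ⟨i, k, hS⟩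
    have hmem : ∀ e : Fin 6, e ∈ S ↔ ∃ j : ℕ, j < k ∧ e = i + (j : Fin 6) := by
      intro e
      rw [← Finset.mem_coe, hS]; exact Iff.rfl
    refine ⟨i, ⟨min k 6, by omega⟩, ?_⟩
    ext e
    rw [hmem e]
    simp only [arcF, Finset.mem_filter, Finset.mem_univ, true_and]
    constructor
    · rintro ⟨j, hj, rfl⟩
      refine ⟨(j : Fin 6), ?_, ?_⟩
      · have h1 : ((j : Fin 6) : ℕ) = j % 6 := Fin.val_natCast j 6
        have h2 : j % 6 ≤ j := Nat.mod_le j 6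
        have h3 : j % 6 < 6 := Nat.mod_lt j (by norm_num)
        simp only [h1]; omega
      · rw [Fin.cast_val_eq_self]
    · rintro ⟨j, hj, rfl⟩
      exact ⟨(j : ℕ), by omega, rfl⟩
  · rintro ⟨i, k, rfl⟩
    refine ⟨i, (k : ℕ), ?_⟩
    ext e
    simp only [Finset.mem_coe, arcF, Finset.mem_filter, Finset.mem_univ, true_and,
      Set.mem_setOf_eq]
    constructor
    · rintro ⟨j, hj, rfl⟩
      exact ⟨(j : ℕ), hj, rfl⟩
    · rintro ⟨j, hj, rfl⟩
      have hj6 : j < 6 := by omega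
      refine ⟨⟨j, hj6⟩, by simpa using hj, by congr 1⟩

lemma keyLemma : ∀ (S : Finset (Fin 6)) (d d' : Fin 6), (d' = d + 1 ∨ d = d' + 1) →
    consF S → d ∉ S → d' ∈ S → consF (insert d S) ∧ consF (S.erase d') := by decide

/-- if R3 holds at `p` and `d`, `d'` are consecutive directions with `d`
incoming at `p` (towards an occupied node) and `d'` outgoing at `p`, then making `d`
outgoing, or making `d'` incoming, keeps R3 satisfied at `p`. -/
theorem R3_preserved_by_flipping_consecutive
    (P : Finset Node) (hPS : IsParticleSystem P)
    (c : Cfg) (hwf : ConfigWF P c)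
    (p : Node) (hp : p ∈ P) (h3 : R3 P c p)
    (d d' : Fin 6) (hcons : d' = d + 1 ∨ d = d' + 1)
    (hin : p + dirv d ∈ P ∧ c (p + dirv d) p = true)
    (hout : p + dirv d' ∈ P ∧ c p (p + dirv d') = true) :
    R3 P (setEdge c p (p + dirv d) true false) p ∧
    R3 P (setEdge c p (p + dirv d') false true) p := by
    classical
  set S : Finset (Fin 6) :=
    Finset.univ.filter (fun e => p + dirv e ∈ P ∧ c p (p + dirv e) = true) with hSdef
  have hdirv_inj : Function.Injective dirv := by decide
  have hdnz : ∀ a : Fin 6, dirv a ≠ 0 := by decide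
  have hpne : ∀ a : Fin 6, ¬ (p = p + dirv a) := fun a h => hdnz a (left_eq_add.mp h)
  have hne : ∀ e a : Fin 6, e ≠ a → p + dirv e ≠ p + dirv a :=
    fun e a hea h => hea (hdirv_inj (add_left_cancel h))
  have hout_eq : outSet P c p = ↑S := by
    ext e; simp [outSet, hSdef]
  have hdS : d ∉ S := by
    simp only [hSdef, Finset.mem_filter, Finset.mem_univ, true_and, not_and]
    intro _
    simp [hwf.2 _ _ hin.2]
  have hd'S : d' ∈ S := by
    simp only [hSdef, Finset.mem_filter, Finset.mem_univ, true_and]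
    exact hout
  have hconsS : consF S := (consF_iff S).1 (by rw [← hout_eq]; exact h3)
  obtain ⟨hk1, hk2⟩ := keyLemma S d d' hcons hconsS hdS hd'S
  constructor
  · have h1 : outSet P (setEdge c p (p + dirv d) true false) p = ↑(insert d S) := by
      ext e
      simp only [outSet, Set.mem_setOf_eq, Finset.coe_insert, Set.mem_insert_iff,
        Finset.mem_coe, hSdef, Finset.mem_filter, Finset.mem_univ, true_and]
      by_cases he : e = d
      · subst he
        simp [setEdge, hin.1]
      · simp [setEdge, hne e d he, hpne d, he]
    unfold R3
    rw [h1, consF_iff]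
    exact hk1
  · have h2 : outSet P (setEdge c p (p + dirv d') false true) p = ↑(S.erase d') := by
      ext e
      simp only [outSet, Set.mem_setOf_eq, Finset.coe_erase, Set.mem_diff,
        Finset.mem_coe, hSdef, Finset.mem_filter, Finset.mem_univ, true_and,
        Set.mem_singleton_iff]
      by_cases he : e = d'
      · subst he
        simp [setEdge]
      · simp [setEdge, hne e d' he, hpne d', he]
    unfold R3
    rw [h2, consF_iff]
    exact hk2
end

section
/- Let P be a particle system on the triangular grid, let p ∈ P be such that P \ {p} is nonempty and the subgraph induced on P \ {p} is connected (so P \ {p} is a particle system), let c be a configuration of P, and let c' be the configuration of P \ {p} obtained by restricting c to the edges not incident to p. For every particle q ∈ P \ {p}: if R1 (respectively R2, respectively R4) holds at q in c, then R1 (respectively R2, respectively R4) holds at q in c'. -/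
/-- restricting a configuration of `P` to `P \ {p}` preserves R1, R2 and R4
at every remaining particle. -/
theorem rules_preserved_by_removal
    (P : Finset Node) (hPS : IsParticleSystem P)
    (p : Node) (hp : p ∈ P)
    (hne : (P.erase p).Nonempty) (hconn : ConnectedOn ↑(P.erase p))
    (c : Cfg) (hwf : ConfigWF P c)
    (q : Node) (hq : q ∈ P.erase p) :
    (R1 P c q → R1 (P.erase p) (restrictCfg c p) q) ∧
    (R2 P c q → R2 (P.erase p) (restrictCfg c p) q) ∧
    (R4 P c q → R4 (P.erase p) (restrictCfg c p) q) := by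
  refine ⟨?_, ?_, ?_⟩
  · intro h r hr
    obtain ⟨hq', hr', hadj⟩ := hr
    have hqp : q ≠ p := (Finset.mem_erase.mp hq').1
    have hrp : r ≠ p := (Finset.mem_erase.mp hr').1
    have := h r ⟨Finset.mem_of_mem_erase hq', Finset.mem_of_mem_erase hr', hadj⟩
    simpa [restrictCfg, hqp, hrp] using this
  · intro h
    refine le_trans (Finset.card_le_card ?_) h
    intro d hd
    simp only [Finset.mem_filter, Finset.mem_univ, true_and] at hd ⊢
    obtain ⟨hd1, hd2⟩ := hd
    have hqp : q ≠ p := (Finset.mem_erase.mp hq).1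
    have hdp : q + dirv d ≠ p := (Finset.mem_erase.mp hd1).1
    refine ⟨Finset.mem_of_mem_erase hd1, ?_⟩
    simpa [restrictCfg, hqp, hdp] using hd2
  · intro h ⟨a, b, ha, hb, h1, h2, h3, h4, h5, h6⟩
    have hqp : q ≠ p := (Finset.mem_erase.mp hq).1
    have hap : a ≠ p := (Finset.mem_erase.mp ha).1
    have hbp : b ≠ p := (Finset.mem_erase.mp hb).1
    simp only [restrictCfg, hqp, hap, hbp] at h4 h5 h6
    exact h ⟨a, b, Finset.mem_of_mem_erase ha, Finset.mem_of_mem_erase hb, h1, h2, h3,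
      by simpa [restrictCfg, hqp, hap, hbp] using h4,
      by simpa [restrictCfg, hqp, hap, hbp] using h5,
      by simpa [restrictCfg, hqp, hap, hbp] using h6⟩
end

section
/- Let P be a simply connected particle system on the triangular grid that contains a pending particle, and assume that for every simply connected particle system Q with fewer particles than P, every Gouda-fair sequential execution on Q reaches a final configuration in which every edge is directed, R2, R3 and R4 hold at every particle, and there is exactly one sink. Then for every Gouda-fair sequential execution c₀, c₁, … on P and every index i₀ such that all c_i with i ≥ i₀ occur infinitely often: all edges of P are stable, and c_{i₀} is a final configuration in which every edge is directed, R2, R3 and R4 hold at every particle, and there is exactly one sink. -/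
section Basic

lemma dirv_ne_zero : ∀ k : Fin 6, dirv k ≠ 0 := by decide

lemma dirv_neg : ∀ k : Fin 6, dirv (k + 3) = -dirv k := by decide

lemma dirv_succ_sub : ∀ k : Fin 6, dirv (k + 1) - dirv k = dirv (k + 2) := by decide

lemma adj_symm {u v : Node} (h : adj u v) : adj v u := by
  obtain ⟨i, rfl⟩ := h
  exact ⟨i + 3, by rw [dirv_neg]; ring⟩

lemma adj_irrefl (u : Node) : ¬ adj u u := by
  rintro ⟨i, hi⟩
  exact dirv_ne_zero i (by linear_combination hi.symm)

lemma consecutive_empty : ConsecutiveSet (∅ : Set (Fin 6)) := by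
  refine ⟨0, 0, ?_⟩
  ext d; simp

open Fin.NatCast Fin.CommRing in
lemma consecutive_singleton (a : Fin 6) : ConsecutiveSet ({a} : Set (Fin 6)) := by
  refine ⟨a, 1, ?_⟩
  ext d
  constructor
  · rintro rfl; exact ⟨0, by norm_num⟩
  · rintro ⟨j, hj, rfl⟩
    interval_cases j
    simp

open Fin.NatCast Fin.CommRing in
lemma arc_singleton {S : Set (Fin 6)} (hS : ConsecutiveSet S) {a : Fin 6}
    (ha : a ∈ S) (h1 : a + 1 ∉ S) (h2 : a - 1 ∉ S) : S = {a} := by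
  obtain ⟨i, k, rfl⟩ := hS
  by_cases hk : 6 ≤ k
  · exfalso
    exact h1 ⟨((a + 1) - i).val, lt_of_lt_of_le (Fin.is_lt _) hk, by
      rw [Fin.cast_val_eq_self]; ring⟩
  · push_neg at hk
    obtain ⟨j0, hj0, haj⟩ := ha
    have hj1 : ¬ (j0 + 1 < k) := by
      intro h
      exact h1 ⟨j0 + 1, h, by rw [haj]; push_cast; ring⟩
    have hj2 : j0 = 0 := by
      by_contra hne
      have hj0' : 1 ≤ j0 := Nat.one_le_iff_ne_zero.mpr hne
      refine h2 ⟨j0 - 1, by omega, ?_⟩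
      rw [haj, Nat.cast_sub hj0']
      push_cast; ring
    have hk1 : k = 1 := by omega
    subst hk1 hj2
    ext d
    constructor
    · rintro ⟨j, hj, rfl⟩
      interval_cases j
      simp [haj]
    · rintro rfl
      exact ⟨0, by norm_num, haj⟩

end Basic
section CfgBasic

variable {P : Finset Node} {c : Cfg} {x a b : Node}

lemma orientOut_offrow (h : a ≠ x) : orientOut P c x a b = c a b := by
  simp only [orientOut, if_neg (fun hh : a = x ∧ _ => h hh.1)]

lemma clearOut_offrow (h : a ≠ x) : clearOut c x a b = c a b := by
  simp only [clearOut, if_neg h]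

lemma orientOut_of_true (h : c a b = true) : orientOut P c x a b = true := by
  simp only [orientOut]
  split
  · rfl
  · exact h

lemma orientOut_true_iff :
    orientOut P c x a b = true ↔
      (a = x ∧ isEdge P a b ∧ c a b = false ∧ c b a = false) ∨ c a b = true := by
  simp only [orientOut]
  split
  · next h => exact iff_of_true rfl (Or.inl h)
  · next h => simp [h]

lemma step_preserves_offrow (h : a ≠ x) : step P c x a b = c a b := by
  unfold step
  split
  · exact orientOut_offrow h
  · exact clearOut_offrow h

lemma not_activable_iff : ¬ Activable P c x ↔ step P c x = c := by
  simp [Activable]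

lemma step_eq_of_cond
    (h : R2 P (orientOut P c x) x ∧ R3 P (orientOut P c x) x ∧ R4 P (orientOut P c x) x) :
    step P c x = orientOut P c x := by
  unfold step; rw [if_pos h]

lemma step_eq_of_not_cond
    (h : ¬(R2 P (orientOut P c x) x ∧ R3 P (orientOut P c x) x ∧ R4 P (orientOut P c x) x)) :
    step P c x = clearOut c x := by
  unfold step; rw [if_neg h]

lemma configWF_orientOut (h : ConfigWF P c) : ConfigWF P (orientOut P c x) := by
  constructor
  · intro a b hab
    rw [orientOut_true_iff] at hab
    rcases hab with ⟨_, he, _⟩ | ht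
    · exact he
    · exact h.1 a b ht
  · intro a b hab
    rw [orientOut_true_iff] at hab
    have goalval : orientOut P c x b a = c b a := by
      simp only [orientOut]
      rw [if_neg]
      rintro ⟨rfl, he2, hf2, hf2'⟩
      rcases hab with ⟨rfl, he, hf, hf'⟩ | ht
      · exact absurd he.2.2 (adj_irrefl _)
      · rw [ht] at hf2'; exact Bool.noConfusion hf2'
    rw [goalval]
    rcases hab with ⟨rfl, he, hf, hf'⟩ | ht
    · exact hf'
    · exact h.2 a b ht

lemma not_activable_of_no_edges (hrow : ∀ b, c x b = false)
    (hedge : ∀ b, ¬ isEdge P x b) : ¬ Activable P c x := by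
  have ho : orientOut P c x = c := by
    funext a b
    by_cases hax : a = x
    · subst hax
      simp only [orientOut]
      rw [if_neg]
      rintro ⟨-, he, -⟩
      exact hedge b he
    · exact orientOut_offrow hax
  rw [not_activable_iff, step_eq_of_cond, ho]
  rw [ho]
  refine ⟨?_, ?_, ?_⟩
  · unfold R2
    have : Finset.filter (fun d : Fin 6 => x + dirv d ∈ P ∧ c x (x + dirv d) = true)
        Finset.univ = ∅ := by
      ext d; simp [hrow]
    rw [this]; simp
  · unfold R3
    have : outSet P c x = ∅ := by
      ext d; simp [outSet, hrow]
    rw [this]; exact consecutive_empty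
  · rintro ⟨q', r', -, -, -, -, -, hc, -⟩
    rw [hrow q'] at hc; exact Bool.noConfusion hc

lemma final_constant {e : ℕ → Cfg} (hexec : SeqExec P e) {j : ℕ} (hfin : Final P (e j)) :
    ∀ i, j ≤ i → e i = e j := by
  intro i hi
  induction i, hi using Nat.le_induction with
  | base => rfl
  | succ n hn ih =>
    rcases hexec.2 n with ⟨x, -, hact, -⟩ | ⟨-, heq⟩
    · rw [ih] at hact; exact absurd hact (hfin x)
    · rw [heq, ih]

end CfgBasic
section Pending

lemma fin6_add5 : ∀ d : Fin 6, d + 5 ≠ d := by decide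
lemma fin6_add1 : ∀ d : Fin 6, d + 1 ≠ d := by decide
lemma fin6_add4 : ∀ d : Fin 6, d + 4 ≠ d := by decide
lemma fin6_add2 : ∀ d : Fin 6, d + 2 ≠ d := by decide

variable {P : Finset Node} {p : Node} {dq : Fin 6}

lemma pend_nbr (huniq : ∀ d : Fin 6, p + dirv d ∈ P → d = dq) :
    ∀ y, y ∈ P → adj p y → y = p + dirv dq := by
  rintro y hy ⟨i, rfl⟩
  rw [huniq i hy]

lemma pend_nbr' (huniq : ∀ d : Fin 6, p + dirv d ∈ P → d = dq) :
    ∀ y, y ∈ P → adj y p → y = p + dirv dq := by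
  rintro y hy ⟨i, hi⟩
  have h3 : y = p + dirv (i + 3) := by
    rw [dirv_neg]
    have : y = p - dirv i := by rw [hi]; ring
    rw [this]; ring
  rw [h3] at hy ⊢
  rw [huniq _ hy]

lemma q_ne_p : p + dirv dq ≠ p := by
  intro h
  exact dirv_ne_zero dq (by linear_combination h)

lemma adj_p_q : adj p (p + dirv dq) := ⟨dq, rfl⟩

open Fin.CommRing in
lemma geo1 (huniq : ∀ d : Fin 6, p + dirv d ∈ P → d = dq) :
    p + dirv dq + dirv (dq + 3 + 1) ∉ P := by
  intro hmem
  have harith : p + dirv dq + dirv (dq + 3 + 1) = p + dirv (dq + 5) := by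
    have h := dirv_succ_sub (dq + 4)
    have h45 : dq + 3 + 1 = dq + 4 := by ring
    have h56 : dq + 4 + 1 = dq + 5 := by ring
    have h60 : ∀ d : Fin 6, d + 4 + 2 = d := by decide
    rw [h45]
    rw [h56, h60 dq] at h
    linear_combination -h
  rw [harith] at hmem
  exact fin6_add5 dq (huniq _ hmem)

open Fin.CommRing in
lemma geo2 (huniq : ∀ d : Fin 6, p + dirv d ∈ P → d = dq) :
    p + dirv dq + dirv (dq + 3 - 1) ∉ P := by
  intro hmem
  have harith : p + dirv dq + dirv (dq + 3 - 1) = p + dirv (dq + 1) := by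
    have h := dirv_succ_sub dq
    have h32 : dq + 3 - 1 = dq + 2 := by ring
    rw [h32]
    linear_combination -h
  rw [harith] at hmem
  exact fin6_add1 dq (huniq _ hmem)

variable {c : Cfg}

lemma R2_at_p (huniq : ∀ d : Fin 6, p + dirv d ∈ P → d = dq) : R2 P c p := by
  unfold R2
  have hsub : Finset.filter (fun d : Fin 6 => p + dirv d ∈ P ∧ c p (p + dirv d) = true)
      Finset.univ ⊆ {dq} := by
    intro d hd
    rw [Finset.mem_filter] at hd
    rw [Finset.mem_singleton]
    exact huniq d hd.2.1
  calc _ ≤ ({dq} : Finset (Fin 6)).card := Finset.card_le_card hsub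
    _ ≤ 3 := by simp

lemma R3_at_p (huniq : ∀ d : Fin 6, p + dirv d ∈ P → d = dq) : R3 P c p := by
  unfold R3
  by_cases hc : c p (p + dirv dq) = true
  · by_cases hqm : p + dirv dq ∈ P
    · have : outSet P c p = {dq} := by
        ext d
        constructor
        · rintro ⟨h1, h2⟩; exact huniq d h1
        · rintro rfl; exact ⟨hqm, hc⟩
      rw [this]; exact consecutive_singleton dq
    · have : outSet P c p = ∅ := by
        ext d
        simp only [Set.mem_empty_iff_false, iff_false]
        rintro ⟨h1, h2⟩
        exact hqm (huniq d h1 ▸ h1)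
      rw [this]; exact consecutive_empty
  · have : outSet P c p = ∅ := by
      ext d
      simp only [Set.mem_empty_iff_false, iff_false]
      rintro ⟨h1, h2⟩
      rw [huniq d h1] at h2
      exact hc h2
    rw [this]; exact consecutive_empty

lemma R4_at_p (huniq : ∀ d : Fin 6, p + dirv d ∈ P → d = dq) : R4 P c p := by
  rintro ⟨q', r', hq', hr', ha1, ha2, ha3, hc1, hc2, hc3⟩
  rw [pend_nbr huniq q' hq' ha1] at ha2
  rw [pend_nbr' huniq r' hr' ha3] at ha2
  exact adj_irrefl _ ha2

lemma orientOut_at_p (huniq : ∀ d : Fin 6, p + dirv d ∈ P → d = dq)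
    (h : ¬(c p (p + dirv dq) = false ∧ c (p + dirv dq) p = false)) :
    orientOut P c p = c := by
  funext a b
  simp only [orientOut]
  rw [if_neg]
  rintro ⟨rfl, he, h1, h2⟩
  have hb : b = a + dirv dq := pend_nbr huniq b he.2.1 he.2.2
  subst hb
  exact h ⟨h1, h2⟩

lemma step_at_p (huniq : ∀ d : Fin 6, p + dirv d ∈ P → d = dq) :
    step P c p = orientOut P c p :=
  step_eq_of_cond ⟨R2_at_p huniq, R3_at_p huniq, R4_at_p huniq⟩

lemma not_activable_p (huniq : ∀ d : Fin 6, p + dirv d ∈ P → d = dq)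
    (h : ¬(c p (p + dirv dq) = false ∧ c (p + dirv dq) p = false)) :
    ¬ Activable P c p := by
  rw [not_activable_iff, step_at_p huniq]
  exact orientOut_at_p huniq h

lemma activable_p_undirected (hp : p ∈ P)
    (huniq : ∀ d : Fin 6, p + dirv d ∈ P → d = dq) (hqm : p + dirv dq ∈ P)
    (h1 : c p (p + dirv dq) = false) (h2 : c (p + dirv dq) p = false) :
    Activable P c p ∧ (step P c p) p (p + dirv dq) = true := by
  have hso : step P c p = orientOut P c p := step_at_p huniq
  have htrue : (orientOut P c p) p (p + dirv dq) = true := by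
    rw [orientOut_true_iff]
    exact Or.inl ⟨rfl, ⟨hp, hqm, adj_p_q⟩, h1, h2⟩
  constructor
  · intro heq
    rw [hso] at heq
    rw [heq] at htrue
    rw [h1] at htrue
    exact Bool.noConfusion htrue
  · rw [hso]; exact htrue

end Pending
section Reach

lemma reach_refl {S : Set Node} (a : Node) : reach S a a := Relation.ReflTransGen.refl

lemma reach_mono {S T : Set Node} (h : S ⊆ T) {a b : Node} (hr : reach S a b) :
    reach T a b := by
  induction hr with
  | refl => exact Relation.ReflTransGen.refl
  | tail _ h2 ih => exact Relation.ReflTransGen.tail ih ⟨h h2.1, h h2.2.1, h2.2.2⟩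

lemma reach_erase {P : Finset Node} {p : Node} {dq : Fin 6}
    (huniq : ∀ d : Fin 6, p + dirv d ∈ P → d = dq) :
    ∀ a b : Node, reach ↑P a b → b ≠ p →
      reach ↑(P.erase p) (if a = p then p + dirv dq else a) b := by
  intro a b hr hbp
  induction hr using Relation.ReflTransGen.head_induction_on with
  | refl => rw [if_neg hbp]; exact reach_refl b
  | head h hr ih =>
    rename_i a' c'
    obtain ⟨haP, hcP, hadj⟩ := h
    rw [Finset.mem_coe] at haP hcP
    by_cases hap : a' = p
    · rw [if_pos hap]
      have hc : c' = p + dirv dq := pend_nbr huniq c' hcP (hap ▸ hadj)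
      rw [hc, if_neg q_ne_p] at ih
      exact ih
    · rw [if_neg hap]
      by_cases hcp : c' = p
      · have ha : a' = p + dirv dq := pend_nbr' huniq a' haP (hcp ▸ hadj)
        rw [hcp, if_pos rfl] at ih
        rw [ha]; exact ih
      · rw [if_neg hcp] at ih
        refine Relation.ReflTransGen.head ⟨?_, ?_, hadj⟩ ih
        · rw [Finset.mem_coe, Finset.mem_erase]; exact ⟨hap, haP⟩
        · rw [Finset.mem_coe, Finset.mem_erase]; exact ⟨hcp, hcP⟩

lemma particle_erase {P : Finset Node} {p : Node} {dq : Fin 6}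
    (hPS : IsParticleSystem P) (hq : p + dirv dq ∈ P)
    (huniq : ∀ d : Fin 6, p + dirv d ∈ P → d = dq) :
    IsParticleSystem (P.erase p) := by
  constructor
  · exact ⟨p + dirv dq, Finset.mem_erase.mpr ⟨q_ne_p, hq⟩⟩
  · intro a ha b hb
    rw [Finset.mem_coe, Finset.mem_erase] at ha hb
    have := reach_erase huniq a b (hPS.2 a (Finset.mem_coe.mpr ha.2) b (Finset.mem_coe.mpr hb.2)) hb.1
    rwa [if_neg ha.1] at this

lemma simplyconn_erase {P : Finset Node} {p : Node} {dq : Fin 6}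
    (hSC : SimplyConnected P) (hp : p ∈ P)
    (huniq : ∀ d : Fin 6, p + dirv d ∈ P → d = dq) :
    SimplyConnected (P.erase p) := by
  set z := p + dirv (dq + 1) with hz
  have hzP : z ∉ P := fun hmem => fin6_add1 dq (huniq _ hmem)
  have hsub : {v : Node | v ∉ P} ⊆ {v : Node | v ∉ P.erase p} := by
    intro v hv hv2
    exact hv (Finset.mem_erase.mp hv2).2
  have hpS : p ∈ {v : Node | v ∉ P.erase p} := by
    intro h
    exact (Finset.mem_erase.mp h).1 rfl
  have hnotP : ∀ v : Node, v ∈ {v : Node | v ∉ P.erase p} → v ≠ p → v ∉ P := by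
    intro v hv hvp hvP
    exact hv (Finset.mem_erase.mpr ⟨hvp, hvP⟩)
  have hzS : z ∈ {v : Node | v ∉ P.erase p} := hsub hzP
  have hcompl : ∀ u v : Node, u ∉ P → v ∉ P → reach {v : Node | v ∉ P.erase p} u v := by
    intro u v hu hv
    exact reach_mono hsub (hSC u hu v hv)
  intro a ha b hb
  by_cases hap : a = p
  · rw [hap]
    by_cases hbp : b = p
    · rw [hbp]; exact reach_refl p
    · exact Relation.ReflTransGen.head ⟨hpS, hzS, ⟨dq + 1, rfl⟩⟩
        (hcompl z b hzP (hnotP b hb hbp))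
  · by_cases hbp : b = p
    · rw [hbp]
      exact Relation.ReflTransGen.tail (hcompl a z (hnotP a ha hap) hzP)
        ⟨hzS, hpS, adj_symm ⟨dq + 1, rfl⟩⟩
    · exact hcompl a b (hnotP a ha hap) (hnotP b hb hbp)

end Reach
section Projection

variable {P : Finset Node} {p : Node} {dq : Fin 6} {c : Cfg} {x a b : Node}

lemma bool_false {bb : Bool} (h : ¬ bb = true) : bb = false := by
  cases bb
  · rfl
  · exact absurd rfl h

lemma isEdge_erase_iff (ha : a ≠ p) (hb : b ≠ p) :
    isEdge (P.erase p) a b ↔ isEdge P a b := by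
  unfold isEdge
  rw [Finset.mem_erase, Finset.mem_erase]
  tauto

lemma restrict_ne (ha : a ≠ p) (hb : b ≠ p) : restrictCfg c p a b = c a b := by
  simp only [restrictCfg]
  rw [if_neg]
  tauto

lemma restrict_left : restrictCfg c p p b = false := by
  simp [restrictCfg]

lemma restrict_right : restrictCfg c p a p = false := by
  simp [restrictCfg]

lemma configWF_restrict (h : ConfigWF P c) :
    ConfigWF (P.erase p) (restrictCfg c p) := by
  constructor
  · intro a b hab
    by_cases ha : a = p
    · rw [ha, restrict_left] at hab; exact absurd hab (by simp)
    by_cases hb : b = p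
    · rw [hb, restrict_right] at hab; exact absurd hab (by simp)
    rw [restrict_ne ha hb] at hab
    exact (isEdge_erase_iff ha hb).mpr (h.1 a b hab)
  · intro a b hab
    by_cases ha : a = p
    · rw [ha, restrict_left] at hab; exact absurd hab (by simp)
    by_cases hb : b = p
    · rw [hb, restrict_right] at hab; exact absurd hab (by simp)
    rw [restrict_ne ha hb] at hab
    rw [restrict_ne hb ha]
    exact h.2 a b hab

lemma target_eq_q (huniq : ∀ d : Fin 6, p + dirv d ∈ P → d = dq)
    (hxP : x ∈ P) {d : Fin 6} (hd : x + dirv d = p) : x = p + dirv dq :=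
  pend_nbr' huniq x hxP ⟨d, hd.symm⟩

lemma orient_restrict_comm (hx : x ≠ p) :
    restrictCfg (orientOut P c x) p = orientOut (P.erase p) (restrictCfg c p) x := by
  funext a b
  by_cases ha : a = p
  · rw [ha, restrict_left]
    have hc : ¬ ((p : Node) = x ∧ isEdge (P.erase p) p b ∧ restrictCfg c p p b = false ∧
        restrictCfg c p b p = false) := by
      rintro ⟨hh, -⟩; exact hx hh.symm
    simp only [orientOut]
    rw [if_neg hc, restrict_left]
  by_cases hb : b = p
  · rw [hb, restrict_right]
    have hc : ¬ (a = x ∧ isEdge (P.erase p) a p ∧ restrictCfg c p a p = false ∧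
        restrictCfg c p p a = false) := by
      rintro ⟨-, he, -⟩
      exact (Finset.mem_erase.mp he.2.1).1 rfl
    simp only [orientOut]
    rw [if_neg hc, restrict_right]
  rw [restrict_ne ha hb]
  have hiff : (a = x ∧ isEdge P a b ∧ c a b = false ∧ c b a = false) ↔
      (a = x ∧ isEdge (P.erase p) a b ∧ restrictCfg c p a b = false ∧
        restrictCfg c p b a = false) := by
    rw [restrict_ne ha hb, restrict_ne hb ha, isEdge_erase_iff ha hb]
  simp only [orientOut]
  by_cases hcond : a = x ∧ isEdge P a b ∧ c a b = false ∧ c b a = false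
  · rw [if_pos hcond, if_pos (hiff.mp hcond)]
  · rw [if_neg hcond, if_neg (fun hh => hcond (hiff.mpr hh)), restrict_ne ha hb]

lemma clear_restrict_comm (hx : x ≠ p) :
    restrictCfg (clearOut c x) p = clearOut (restrictCfg c p) x := by
  funext a b
  by_cases ha : a = p
  · rw [ha, restrict_left]
    simp only [clearOut]
    rw [if_neg (fun hh : (p : Node) = x => hx hh.symm), restrict_left]
  by_cases hb : b = p
  · rw [hb, restrict_right]
    simp only [clearOut]
    split
    · rfl
    · rw [restrict_right]
  rw [restrict_ne ha hb]
  simp only [clearOut]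
  split
  · rfl
  · rw [restrict_ne ha hb]

lemma out_pred_iff (hx : x ≠ p) (hxp0 : c x p = false) (d : Fin 6) :
    (x + dirv d ∈ P ∧ c x (x + dirv d) = true) ↔
      (x + dirv d ∈ P.erase p ∧ restrictCfg c p x (x + dirv d) = true) := by
  constructor
  · rintro ⟨h1, h2⟩
    have htp : x + dirv d ≠ p := by
      intro hh; rw [hh] at h2; rw [hxp0] at h2; exact Bool.noConfusion h2
    exact ⟨Finset.mem_erase.mpr ⟨htp, h1⟩, by rw [restrict_ne hx htp]; exact h2⟩
  · rintro ⟨h1, h2⟩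
    obtain ⟨htp, h1'⟩ := Finset.mem_erase.mp h1
    rw [restrict_ne hx htp] at h2
    exact ⟨h1', h2⟩

lemma R2_iff (hx : x ≠ p) (hxp0 : c x p = false) :
    R2 P c x ↔ R2 (P.erase p) (restrictCfg c p) x := by
  unfold R2
  have : Finset.filter (fun d : Fin 6 => x + dirv d ∈ P ∧ c x (x + dirv d) = true)
      Finset.univ = Finset.filter
      (fun d : Fin 6 => x + dirv d ∈ P.erase p ∧ restrictCfg c p x (x + dirv d) = true)
      Finset.univ := by
    ext d
    simp only [Finset.mem_filter, Finset.mem_univ, true_and]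
    exact out_pred_iff hx hxp0 d
  rw [this]

lemma R3_iff (hx : x ≠ p) (hxp0 : c x p = false) :
    R3 P c x ↔ R3 (P.erase p) (restrictCfg c p) x := by
  unfold R3
  have : outSet P c x = outSet (P.erase p) (restrictCfg c p) x := by
    ext d
    exact out_pred_iff hx hxp0 d
  rw [this]

lemma R4_iff (huniq : ∀ d : Fin 6, p + dirv d ∈ P → d = dq)
    (hWF : ConfigWF P c) (hx : x ≠ p) (hxp0 : c x p = false) :
    R4 P c x ↔ R4 (P.erase p) (restrictCfg c p) x := by
  unfold R4
  rw [not_iff_not]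
  constructor
  · rintro ⟨q', r', hq', hr', ha1, ha2, ha3, hc1, hc2, hc3⟩
    have hq'p : q' ≠ p := by
      intro hh; rw [hh] at hc1; rw [hxp0] at hc1; exact Bool.noConfusion hc1
    have hr'p : r' ≠ p := by
      intro hh
      rw [hh] at hc2 hc3
      have he1 := hWF.1 p x hc3
      have he2 := hWF.1 q' p hc2
      have hx_eq : x = p + dirv dq := pend_nbr huniq x he1.2.1 he1.2.2
      have hq_eq : q' = p + dirv dq := pend_nbr' huniq q' he2.1 he2.2.2
      have hqx : q' = x := hq_eq.trans hx_eq.symm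
      rw [hqx] at ha1
      exact adj_irrefl _ ha1
    exact ⟨q', r', Finset.mem_erase.mpr ⟨hq'p, hq'⟩, Finset.mem_erase.mpr ⟨hr'p, hr'⟩,
      ha1, ha2, ha3, by rw [restrict_ne hx hq'p]; exact hc1,
      by rw [restrict_ne hq'p hr'p]; exact hc2, by rw [restrict_ne hr'p hx]; exact hc3⟩
  · rintro ⟨q', r', hq', hr', ha1, ha2, ha3, hc1, hc2, hc3⟩
    obtain ⟨hq'p, hq'P⟩ := Finset.mem_erase.mp hq'
    obtain ⟨hr'p, hr'P⟩ := Finset.mem_erase.mp hr'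
    rw [restrict_ne hx hq'p] at hc1
    rw [restrict_ne hq'p hr'p] at hc2
    rw [restrict_ne hr'p hx] at hc3
    exact ⟨q', r', hq'P, hr'P, ha1, ha2, ha3, hc1, hc2, hc3⟩

end Projection
section StepEq

variable {P : Finset Node} {p : Node} {dq : Fin 6} {c : Cfg} {x : Node}

lemma c1_xp_false (hxp0 : c x p = false)
    (hnu : ¬(isEdge P x p ∧ c x p = false ∧ c p x = false)) :
    orientOut P c x x p = false := by
  apply bool_false
  intro htrue
  rcases orientOut_true_iff.mp htrue with ⟨-, he, h1, h2⟩ | ht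
  · exact hnu ⟨he, h1, h2⟩
  · rw [hxp0] at ht; exact Bool.noConfusion ht

lemma step_restrict_comm (huniq : ∀ d : Fin 6, p + dirv d ∈ P → d = dq)
    (hWF : ConfigWF P c) (hx : x ≠ p) (hxp0 : c x p = false)
    (hnu : ¬(isEdge P x p ∧ c x p = false ∧ c p x = false)) :
    restrictCfg (step P c x) p = step (P.erase p) (restrictCfg c p) x ∧
      (Activable P c x ↔ Activable (P.erase p) (restrictCfg c p) x) := by
  set c₁ := orientOut P c x with hc₁
  have hOO : restrictCfg c₁ p = orientOut (P.erase p) (restrictCfg c p) x :=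
    orient_restrict_comm hx
  have hWF1 : ConfigWF P c₁ := configWF_orientOut hWF
  have hxp1 : c₁ x p = false := c1_xp_false hxp0 hnu
  have hcond_iff : (R2 P c₁ x ∧ R3 P c₁ x ∧ R4 P c₁ x) ↔
      (R2 (P.erase p) (restrictCfg c₁ p) x ∧ R3 (P.erase p) (restrictCfg c₁ p) x ∧
        R4 (P.erase p) (restrictCfg c₁ p) x) :=
    and_congr (R2_iff hx hxp1)
      (and_congr (R3_iff hx hxp1) (R4_iff huniq hWF1 hx hxp1))
  have hstepeq : restrictCfg (step P c x) p = step (P.erase p) (restrictCfg c p) x := by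
    by_cases hcond : R2 P c₁ x ∧ R3 P c₁ x ∧ R4 P c₁ x
    · have hcondQ := hOO ▸ (hcond_iff.mp hcond)
      rw [step_eq_of_cond hcond, step_eq_of_cond hcondQ, ← hOO]
    · have hcondQ : ¬ (R2 (P.erase p) (orientOut (P.erase p) (restrictCfg c p) x) x ∧
          R3 (P.erase p) (orientOut (P.erase p) (restrictCfg c p) x) x ∧
          R4 (P.erase p) (orientOut (P.erase p) (restrictCfg c p) x) x) := by
        rw [← hOO]
        exact fun hh => hcond (hcond_iff.mpr hh)
      rw [step_eq_of_not_cond hcond, step_eq_of_not_cond hcondQ]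
      exact clear_restrict_comm hx
  refine ⟨hstepeq, ?_, ?_⟩
  · -- Activable P → Activable Q
    intro hact hQeq
    have hre : restrictCfg (step P c x) p = restrictCfg c p := by rw [hstepeq, hQeq]
    by_cases hcond : R2 P c₁ x ∧ R3 P c₁ x ∧ R4 P c₁ x
    · have h1 : step P c x = c₁ := step_eq_of_cond hcond
      have hne : c₁ ≠ c := fun hh => hact (h1.trans hh)
      obtain ⟨a, ha⟩ := Function.ne_iff.mp hne
      obtain ⟨b, hb⟩ := Function.ne_iff.mp ha
      have hax : a = x := by
        by_contra hax
        exact hb (orientOut_offrow hax)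
      rw [hax] at hb
      by_cases hcb : x = x ∧ isEdge P x b ∧ c x b = false ∧ c b x = false
      · have hbp : b ≠ p := by
          rintro rfl
          exact hnu hcb.2
        have hval : c₁ x b = true := by
          have hrfl : c₁ x b =
              if x = x ∧ isEdge P x b ∧ c x b = false ∧ c b x = false then true
              else c x b := rfl
          rw [hrfl, if_pos hcb]
        have hcontra := congrFun (congrFun hre x) b
        rw [h1, restrict_ne hx hbp, restrict_ne hx hbp, hval, hcb.2.2.1] at hcontra
        exact Bool.noConfusion hcontra
      · refine hb ?_
        have hrfl : c₁ x b =
            if x = x ∧ isEdge P x b ∧ c x b = false ∧ c b x = false then true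
            else c x b := rfl
        rw [hrfl, if_neg hcb]
    · have h1 : step P c x = clearOut c x := step_eq_of_not_cond hcond
      have hne : clearOut c x ≠ c := fun hh => hact (h1.trans hh)
      obtain ⟨a, ha⟩ := Function.ne_iff.mp hne
      obtain ⟨b, hb⟩ := Function.ne_iff.mp ha
      have hax : a = x := by
        by_contra hax
        exact hb (clearOut_offrow hax)
      rw [hax] at hb
      have hcv : clearOut c x x b = false := by simp [clearOut]
      have hcxb : c x b = true := by
        by_contra hf
        apply bool_false at hf
        exact hb (by rw [hcv, hf])
      have hbp : b ≠ p := by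
        rintro rfl
        rw [hxp0] at hcxb; exact Bool.noConfusion hcxb
      have hcontra := congrFun (congrFun hre x) b
      rw [h1, restrict_ne hx hbp, restrict_ne hx hbp, hcv, hcxb] at hcontra
      exact Bool.noConfusion hcontra
  · -- Activable Q → Activable P
    intro hactQ
    by_contra hnact
    have hnact' : step P c x = c := not_activable_iff.mp hnact
    exact hactQ (by rw [← hstepeq, hnact'])

end StepEq
section CaseIIq

lemma dirv_inj : ∀ i j : Fin 6, dirv i = dirv j → i = j := by decide

variable {P : Finset Node} {p : Node} {dq : Fin 6} {c : Cfg}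

lemma q_plus_dstar : p + dirv dq + dirv (dq + 3) = p := by
  rw [dirv_neg]; ring

lemma row_false_R {S : Finset Node} {x : Node} (hrow : ∀ b, c x b = false) :
    R2 S c x ∧ R3 S c x ∧ R4 S c x := by
  refine ⟨?_, ?_, ?_⟩
  · unfold R2
    have : Finset.filter (fun d : Fin 6 => x + dirv d ∈ S ∧ c x (x + dirv d) = true)
        Finset.univ = ∅ := by
      ext d; simp [hrow]
    rw [this]; simp
  · unfold R3
    have : outSet S c x = ∅ := by
      ext d; simp [outSet, hrow]
    rw [this]; exact consecutive_empty
  · rintro ⟨q', r', -, -, -, -, -, hc1, -⟩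
    rw [hrow q'] at hc1; exact Bool.noConfusion hc1

lemma not_activable_notinP {x : Node} (hWF : ConfigWF P c) (hx : x ∉ P) :
    ¬ Activable P c x := by
  apply not_activable_of_no_edges
  · intro b
    apply bool_false
    intro h
    exact hx (hWF.1 x b h).1
  · intro b hb
    exact hx hb.1

lemma not_activable_p_restrict :
    ¬ Activable (P.erase p) (restrictCfg c p) p := by
  apply not_activable_of_no_edges
  · intro b; exact restrict_left
  · intro b hb
    exact (Finset.mem_erase.mp hb.1).1 rfl

lemma outq_singleton (hp : p ∈ P)
    (huniq : ∀ d : Fin 6, p + dirv d ∈ P → d = dq)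
    (hqp : c (p + dirv dq) p = true) (hR3 : R3 P c (p + dirv dq)) :
    outSet P c (p + dirv dq) = {dq + 3} := by
  apply arc_singleton hR3
  · refine ⟨?_, ?_⟩
    · rw [q_plus_dstar]; exact hp
    · rw [q_plus_dstar]; exact hqp
  · rintro ⟨hmem, -⟩
    exact geo1 huniq hmem
  · rintro ⟨hmem, -⟩
    exact geo2 huniq hmem

lemma caseII_activable_step (hp : p ∈ P)
    (huniq : ∀ d : Fin 6, p + dirv d ∈ P → d = dq)
    (hqp : c (p + dirv dq) p = true) (hact : Activable P c (p + dirv dq)) :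
    (step P c (p + dirv dq)) (p + dirv dq) p = false := by
  set q := p + dirv dq with hqdef
  by_cases hcond : R2 P (orientOut P c q) q ∧ R3 P (orientOut P c q) q ∧
      R4 P (orientOut P c q) q
  · exfalso
    set c₁ := orientOut P c q with hc₁
    have hstep : step P c q = c₁ := step_eq_of_cond hcond
    have hne : c₁ ≠ c := fun hh => hact (hstep.trans hh)
    obtain ⟨a, ha⟩ := Function.ne_iff.mp hne
    obtain ⟨b, hb⟩ := Function.ne_iff.mp ha
    have hax : a = q := by
      by_contra hax
      exact hb (orientOut_offrow hax)
    rw [hax] at hb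
    by_cases hcb : q = q ∧ isEdge P q b ∧ c q b = false ∧ c b q = false
    · have hbp : b ≠ p := by
        rintro rfl
        rw [hqp] at hcb
        exact Bool.noConfusion hcb.2.2.1
      have hval : c₁ q b = true := by
        have hrfl : c₁ q b =
            if q = q ∧ isEdge P q b ∧ c q b = false ∧ c b q = false then true
            else c q b := rfl
        rw [hrfl, if_pos hcb]
      obtain ⟨d_b, hdb⟩ := hcb.2.1.2.2
      have hout : outSet P c₁ q = {dq + 3} := by
        apply outq_singleton hp huniq (orientOut_of_true hqp) hcond.2.1
      have hdmem : d_b ∈ outSet P c₁ q := by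
        refine ⟨?_, ?_⟩
        · rw [← hdb]; exact hcb.2.1.2.1
        · rw [← hdb]; exact hval
      rw [hout] at hdmem
      have : b = p := by
        rw [hdb, hdmem, q_plus_dstar]
      exact hbp this
    · refine hb ?_
      have hrfl : c₁ q b =
          if q = q ∧ isEdge P q b ∧ c q b = false ∧ c b q = false then true
          else c q b := rfl
      rw [hrfl, if_neg hcb]
  · rw [step_eq_of_not_cond hcond]
    simp [clearOut]

lemma caseII_notact_facts (hp : p ∈ P) (hWF : ConfigWF P c)
    (huniq : ∀ d : Fin 6, p + dirv d ∈ P → d = dq)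
    (hqp : c (p + dirv dq) p = true) (hnact : ¬ Activable P c (p + dirv dq)) :
    (∀ y, y ≠ p → c (p + dirv dq) y = false) ∧
      (∀ y, isEdge P (p + dirv dq) y → y ≠ p → c y (p + dirv dq) = true) := by
  set q := p + dirv dq with hqdef
  have hstep : step P c q = c := not_activable_iff.mp hnact
  by_cases hcond : R2 P (orientOut P c q) q ∧ R3 P (orientOut P c q) q ∧
      R4 P (orientOut P c q) q
  · have hc1eq : orientOut P c q = c := by
      rw [← step_eq_of_cond hcond]; exact hstep
    rw [hc1eq] at hcond
    have hout : outSet P c q = {dq + 3} := outq_singleton hp huniq hqp hcond.2.1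
    have hF2 : ∀ y, y ≠ p → c q y = false := by
      intro y hyp
      apply bool_false
      intro htrue
      have he := hWF.1 q y htrue
      obtain ⟨d, hd⟩ := he.2.2
      have hdmem : d ∈ outSet P c q := ⟨by rw [← hd]; exact he.2.1, by rw [← hd]; exact htrue⟩
      rw [hout] at hdmem
      apply hyp
      rw [hd, hdmem, q_plus_dstar]
    refine ⟨hF2, ?_⟩
    intro y hy hyp
    by_contra hfalse
    apply bool_false at hfalse
    have hcf : c q y = false := hF2 y hyp
    have : orientOut P c q q y = true := by
      have hrfl : orientOut P c q q y =
          if q = q ∧ isEdge P q y ∧ c q y = false ∧ c y q = false then true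
          else c q y := rfl
      rw [hrfl, if_pos ⟨rfl, hy, hcf, hfalse⟩]
    rw [hc1eq, hcf] at this
    exact Bool.noConfusion this
  · exfalso
    rw [step_eq_of_not_cond hcond] at hstep
    have : clearOut c q q p = c q p := by rw [hstep]
    rw [hqp] at this
    simp [clearOut] at this

lemma caseII_notact_Q (hq : p + dirv dq ∈ P)
    (hF2 : ∀ y, y ≠ p → c (p + dirv dq) y = false)
    (hF1 : ∀ y, isEdge P (p + dirv dq) y → y ≠ p → c y (p + dirv dq) = true) :
    ¬ Activable (P.erase p) (restrictCfg c p) (p + dirv dq) := by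
  set q := p + dirv dq with hqdef
  set r := restrictCfg c p with hrdef
  have hrow : ∀ b, r q b = false := by
    intro b
    by_cases hbp : b = p
    · rw [hbp, hrdef]; exact restrict_right
    · rw [hrdef, restrict_ne q_ne_p hbp]; exact hF2 b hbp
  have hOO : orientOut (P.erase p) r q = r := by
    funext a b
    by_cases haq : a = q
    · rw [haq]
      have hnc : ¬ (q = q ∧ isEdge (P.erase p) q b ∧ r q b = false ∧ r b q = false) := by
        rintro ⟨-, he, -, hbq⟩
        obtain ⟨hbp, hbP⟩ := Finset.mem_erase.mp he.2.1
        have : c b q = true := hF1 b ⟨hq, hbP, he.2.2⟩ hbp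
        rw [hrdef, restrict_ne hbp q_ne_p, this] at hbq
        exact Bool.noConfusion hbq
      have hrfl : orientOut (P.erase p) r q q b =
          if q = q ∧ isEdge (P.erase p) q b ∧ r q b = false ∧ r b q = false then true
          else r q b := rfl
      rw [hrfl, if_neg hnc]
    · exact orientOut_offrow haq
  rw [not_activable_iff, step_eq_of_cond, hOO]
  rw [hOO]
  exact row_false_R hrow

end CaseIIq
section Project

variable {P : Finset Node} {p : Node} {dq : Fin 6} {e : ℕ → Cfg} {i0 : ℕ}

lemma not_activable_Q_outside {c : Cfg} {x : Node} (hWF : ConfigWF P c)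
    (hx : x ∉ P.erase p) : ¬ Activable (P.erase p) (restrictCfg c p) x := by
  by_cases hxp : x = p
  · rw [hxp]; exact not_activable_p_restrict
  · have hxP : x ∉ P := fun hmem => hx (Finset.mem_erase.mpr ⟨hxp, hmem⟩)
    apply not_activable_of_no_edges
    · intro b
      by_cases hb : b = p
      · rw [hb]; exact restrict_right
      · rw [restrict_ne hxp hb]
        apply bool_false
        intro h
        exact hxP (hWF.1 x b h).1
    · intro b hb
      exact hxP (Finset.mem_erase.mp hb.1).2

lemma project_exec
    (hexec : SeqExec P e) (hfair : GoudaFair P e)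
    (hrec : ∀ i, i0 ≤ i → InfOften e (e i))
    (HnactP : ∀ i, i0 ≤ i → ¬ Activable P (e i) p)
    (Hx : ∀ i, i0 ≤ i → ∀ x, x ∈ P.erase p →
      ((restrictCfg (step P (e i) x) p = step (P.erase p) (restrictCfg (e i) p) x ∧
        (Activable P (e i) x ↔ Activable (P.erase p) (restrictCfg (e i) p) x)) ∨
       (¬ Activable P (e i) x ∧ ¬ Activable (P.erase p) (restrictCfg (e i) p) x))) :
    SeqExec (P.erase p) (fun k => restrictCfg (e (i0 + k)) p) ∧
    GoudaFair (P.erase p) (fun k => restrictCfg (e (i0 + k)) p) ∧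
    (∀ k, Final (P.erase p) (restrictCfg (e (i0 + k)) p) → Final P (e (i0 + k))) := by
  have hWF : ∀ i, ConfigWF P (e i) := hexec.1
  refine ⟨⟨fun k => configWF_restrict (hWF _), ?_⟩, ?_, ?_⟩
  · -- step clause
    intro k
    rcases hexec.2 (i0 + k) with ⟨x, hxP, hact, hstep⟩ | ⟨hno, hstep⟩
    · have hxp : x ≠ p := by
        rintro rfl
        exact HnactP (i0 + k) (Nat.le_add_right _ _) hact
      have hxQ : x ∈ P.erase p := Finset.mem_erase.mpr ⟨hxp, hxP⟩
      rcases Hx (i0 + k) (Nat.le_add_right _ _) x hxQ with ⟨hse, hiff⟩ | ⟨hna, -⟩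
      · left
        refine ⟨x, hxQ, hiff.mp hact, ?_⟩
        show restrictCfg (e (i0 + k + 1)) p = _
        rw [hstep, hse]
      · exact absurd hact hna
    · right
      constructor
      · intro x
        by_cases hxQ : x ∈ P.erase p
        · rcases Hx (i0 + k) (Nat.le_add_right _ _) x hxQ with ⟨-, hiff⟩ | ⟨-, hna⟩
          · exact fun h => (hno x) (hiff.mpr h)
          · exact hna
        · exact not_activable_Q_outside (hWF _) hxQ
      · show restrictCfg (e (i0 + k + 1)) p = _
        rw [hstep]
  · -- fairness
    intro C hC x hxQ hact
    obtain ⟨k0, -, hk0⟩ := hC 0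
    rcases Hx (i0 + k0) (Nat.le_add_right _ _) x hxQ with ⟨hse, hiff⟩ | ⟨-, hna⟩
    · have hactP : Activable P (e (i0 + k0)) x := by
        apply hiff.mpr
        rw [← hk0] at hact
        exact hact
      have hio := hfair (e (i0 + k0)) (hrec _ (Nat.le_add_right _ _)) x
        (Finset.mem_erase.mp hxQ).2 hactP
      intro N
      obtain ⟨m, hm, hem⟩ := hio (i0 + N)
      refine ⟨m - i0, by omega, ?_⟩
      have hm' : i0 + (m - i0) = m := by omega
      show restrictCfg (e (i0 + (m - i0))) p = _
      rw [hm', hem, hse, ← hk0]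
    · rw [← hk0] at hact
      exact absurd hact hna
  · -- Final lift
    intro k hfin x
    by_cases hxp : x = p
    · rw [hxp]; exact HnactP (i0 + k) (Nat.le_add_right _ _)
    by_cases hxP : x ∈ P
    · have hxQ : x ∈ P.erase p := Finset.mem_erase.mpr ⟨hxp, hxP⟩
      rcases Hx (i0 + k) (Nat.le_add_right _ _) x hxQ with ⟨-, hiff⟩ | ⟨hna, -⟩
      · exact fun h => (hfin x) (hiff.mp h)
      · exact hna
    · exact not_activable_notinP (hWF _) hxP

end Project
/-- if `P` contains a pending particle and every strictly smaller simply
connected particle system stabilises under Gouda-fair executions, then in any Gouda-fair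
execution on `P`, in the recurrent suffix all edges are stable and the recurrent
configuration is final, fully directed, satisfies R2, R3, R4, and has a unique sink. -/
theorem pending_case_stabilises
    (P : Finset Node) (hPS : IsParticleSystem P) (hSC : SimplyConnected P)
    (hpend : ∃ p, Pending P p)
    (IH : ∀ Q : Finset Node, IsParticleSystem Q → SimplyConnected Q → Q.card < P.card →
      ∀ f : ℕ → Cfg, SeqExec Q f → GoudaFair Q f → ∃ i : ℕ, GoodFinal Q (f i))
    (e : ℕ → Cfg) (hexec : SeqExec P e) (hfair : GoudaFair P e)
    (i0 : ℕ) (hrec : ∀ i, i0 ≤ i → InfOften e (e i)) :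
    (∀ a b : Node, isEdge P a b → StableEdge P e i0 a b) ∧ GoodFinal P (e i0) := by
  classical
  obtain ⟨p, hpP, dq, hqP, huniq⟩ := hpend
  have hWF : ∀ i, ConfigWF P (e i) := hexec.1
  -- persistence of the direction p → q
  have hmono : ∀ i, e i p (p + dirv dq) = true → e (i+1) p (p + dirv dq) = true := by
    intro i hi
    rcases hexec.2 i with ⟨x, hxP, hact, hstep⟩ | ⟨-, hstep⟩
    · by_cases hxp : x = p
      · exfalso
        rw [hxp] at hact
        refine not_activable_p huniq ?_ hact
        rintro ⟨h1, -⟩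
        rw [hi] at h1
        exact Bool.noConfusion h1
      · rw [hstep, step_preserves_offrow (fun hh => hxp hh.symm)]
        exact hi
    · rw [hstep]; exact hi
  have hmono' : ∀ i j, i ≤ j → e i p (p + dirv dq) = true →
      e j p (p + dirv dq) = true := by
    intro i j hij hi
    induction j, hij using Nat.le_induction with
    | base => exact hi
    | succ n hn ih => exact hmono n ih
  have hnond : ∀ i, i0 ≤ i →
      ¬ (e i p (p + dirv dq) = false ∧ e i (p + dirv dq) p = false) := by
    rintro i hi ⟨h1, h2⟩
    obtain ⟨hact, hstep_true⟩ := activable_p_undirected hpP huniq hqP h1 h2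
    obtain ⟨j, hij, hej⟩ := hfair (e i) (hrec i hi) p hpP hact i
    have hjq : e j p (p + dirv dq) = true := by rw [hej]; exact hstep_true
    obtain ⟨m, hjm, hem⟩ := hrec i hi j
    have hm := hmono' j m hjm hjq
    rw [hem, h1] at hm
    exact Bool.noConfusion hm
  have hqp_of : ∀ i, i0 ≤ i → e i p (p + dirv dq) = false →
      e i (p + dirv dq) p = true := by
    intro i hi h1
    by_contra hf
    exact hnond i hi ⟨h1, bool_false hf⟩
  have hfalse_mono : ∀ i, i0 ≤ i → e i p (p + dirv dq) = false →
      e (i+1) p (p + dirv dq) = false := by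
    intro i hi h1
    have hqp := hqp_of i hi h1
    rcases hexec.2 i with ⟨x, hxP, hact, hstep⟩ | ⟨-, hstep⟩
    · by_cases hxp : x = p
      · exfalso
        rw [hxp] at hact
        refine not_activable_p huniq ?_ hact
        rintro ⟨-, h2⟩
        rw [hqp] at h2
        exact Bool.noConfusion h2
      · rw [hstep, step_preserves_offrow (fun hh => hxp hh.symm)]
        exact h1
    · rw [hstep]; exact h1
  have hQPS : IsParticleSystem (P.erase p) := particle_erase hPS hqP huniq
  have hQSC : SimplyConnected (P.erase p) := simplyconn_erase hSC hpP huniq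
  have hQcard : (P.erase p).card < P.card := Finset.card_erase_lt_of_mem hpP
  by_cases hdir : e i0 p (p + dirv dq) = true
  · -- CASE I : the edge is directed p → q throughout the suffix
    have hall : ∀ i, i0 ≤ i → e i p (p + dirv dq) = true :=
      fun i hi => hmono' i0 i hi hdir
    have HnactP : ∀ i, i0 ≤ i → ¬ Activable P (e i) p := by
      intro i hi
      refine not_activable_p huniq ?_
      rintro ⟨h1, -⟩
      rw [hall i hi] at h1
      exact Bool.noConfusion h1
    have hxp0all : ∀ i, i0 ≤ i → ∀ x, x ≠ p → e i x p = false := by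
      intro i hi x hxp
      apply bool_false
      intro h
      have he := (hWF i).1 x p h
      have hxq : x = p + dirv dq := pend_nbr' huniq x he.1 he.2.2
      have hh := (hWF i).2 p (p + dirv dq) (hall i hi)
      rw [hxq] at h
      rw [hh] at h
      exact Bool.noConfusion h
    have Hx : ∀ i, i0 ≤ i → ∀ x, x ∈ P.erase p →
        ((restrictCfg (step P (e i) x) p = step (P.erase p) (restrictCfg (e i) p) x ∧
          (Activable P (e i) x ↔ Activable (P.erase p) (restrictCfg (e i) p) x)) ∨
         (¬ Activable P (e i) x ∧ ¬ Activable (P.erase p) (restrictCfg (e i) p) x)) := by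
      intro i hi x hxQ
      left
      obtain ⟨hxp, hxP⟩ := Finset.mem_erase.mp hxQ
      have h0 := hxp0all i hi x hxp
      have hnu : ¬ (isEdge P x p ∧ e i x p = false ∧ e i p x = false) := by
        rintro ⟨he, -, h2⟩
        have hxq : x = p + dirv dq := pend_nbr' huniq x hxP he.2.2
        rw [hxq, hall i hi] at h2
        exact Bool.noConfusion h2
      exact step_restrict_comm huniq (hWF i) hxp h0 hnu
    obtain ⟨hSE, hGFair, hlift⟩ := project_exec hexec hfair hrec HnactP Hx
    obtain ⟨k, hGF⟩ := IH _ hQPS hQSC hQcard _ hSE hGFair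
    have hfinP : Final P (e (i0 + k)) := hlift k hGF.1
    have hconst : ∀ i, i0 ≤ i → e i = e (i0 + k) := by
      intro i hi
      obtain ⟨m, hm, hem⟩ := hrec i hi (i0 + k)
      rw [← hem]
      exact final_constant hexec hfinP m hm
    have hcpq : e (i0 + k) p (p + dirv dq) = true := hall _ (Nat.le_add_right _ _)
    have h0k : ∀ x, x ≠ p → e (i0 + k) x p = false :=
      hxp0all _ (Nat.le_add_right _ _)
    have hR1 : ∀ x ∈ P, R1 P (e (i0 + k)) x := by
      intro x hx y hyE
      by_cases hyp : y = p
      · have hxq : x = p + dirv dq := by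
          apply pend_nbr' huniq x hx
          rw [← hyp]; exact hyE.2.2
        rw [hyp, hxq]
        exact Or.inr hcpq
      · by_cases hxp : x = p
        · have hyq : y = p + dirv dq := by
            apply pend_nbr huniq y hyE.2.1
            rw [← hxp]; exact hyE.2.2
          rw [hxp, hyq]
          exact Or.inl hcpq
        · have hQ1 := (hGF.2.1 x (Finset.mem_erase.mpr ⟨hxp, hx⟩)).1 y
            ((isEdge_erase_iff hxp hyp).mpr hyE)
          rcases hQ1 with h | h
          · left; rw [restrict_ne hxp hyp] at h; exact h
          · right; rw [restrict_ne hyp hxp] at h; exact h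
    have hR234 : ∀ x ∈ P, R2 P (e (i0 + k)) x ∧ R3 P (e (i0 + k)) x ∧
        R4 P (e (i0 + k)) x := by
      intro x hx
      by_cases hxp : x = p
      · rw [hxp]
        exact ⟨R2_at_p huniq, R3_at_p huniq, R4_at_p huniq⟩
      · have h0 := h0k x hxp
        obtain ⟨-, hQ2, hQ3, hQ4⟩ := hGF.2.1 x (Finset.mem_erase.mpr ⟨hxp, hx⟩)
        exact ⟨(R2_iff hxp h0).mpr hQ2, (R3_iff hxp h0).mpr hQ3,
          (R4_iff huniq (hWF _) hxp h0).mpr hQ4⟩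
    have hsink_iff : ∀ x, x ≠ p →
        (IsSink P (e (i0 + k)) x ↔ IsSink (P.erase p) (restrictCfg (e (i0 + k)) p) x) := by
      intro x hxp
      unfold IsSink
      apply forall_congr'
      intro d
      rw [not_iff_not]
      exact out_pred_iff hxp (h0k x hxp) d
    obtain ⟨s, ⟨hsQ, hsink⟩, huniqS⟩ := hGF.2.2
    have hsp : s ≠ p := (Finset.mem_erase.mp hsQ).1
    have hGFP : GoodFinal P (e (i0 + k)) := by
      refine ⟨hfinP, fun x hx => ⟨hR1 x hx, hR234 x hx⟩, ?_⟩
      refine ⟨s, ⟨(Finset.mem_erase.mp hsQ).2, (hsink_iff s hsp).mpr hsink⟩, ?_⟩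
      rintro t ⟨htP, htsink⟩
      have htp : t ≠ p := by
        rintro rfl
        exact htsink dq ⟨hqP, hcpq⟩
      exact huniqS t ⟨Finset.mem_erase.mpr ⟨htp, htP⟩, (hsink_iff t htp).mp htsink⟩
    constructor
    · intro a b hE
      refine ⟨hE, ?_⟩
      intro i hi
      rw [hconst i hi]
      exact hR1 a hE.1 b hE
    · rw [hconst i0 le_rfl]
      exact hGFP
  · -- CASE II : the edge is directed q → p throughout the suffix
    have h00 : e i0 p (p + dirv dq) = false := bool_false hdir
    have hallf : ∀ i, i0 ≤ i → e i p (p + dirv dq) = false := by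
      intro i hi
      induction i, hi using Nat.le_induction with
      | base => exact h00
      | succ n hn ih => exact hfalse_mono n hn ih
    have hallqp : ∀ i, i0 ≤ i → e i (p + dirv dq) p = true :=
      fun i hi => hqp_of i hi (hallf i hi)
    have HnactP : ∀ i, i0 ≤ i → ¬ Activable P (e i) p := by
      intro i hi
      refine not_activable_p huniq ?_
      rintro ⟨-, h2⟩
      rw [hallqp i hi] at h2
      exact Bool.noConfusion h2
    have hnactq : ∀ i, i0 ≤ i → ¬ Activable P (e i) (p + dirv dq) := by
      intro i hi hact
      have hsf := caseII_activable_step hpP huniq (hallqp i hi) hact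
      obtain ⟨m, hm, hem⟩ := hfair (e i) (hrec i hi) _ hqP hact i0
      have hqm := hallqp m hm
      rw [hem, hsf] at hqm
      exact Bool.noConfusion hqm
    have hfacts : ∀ i, i0 ≤ i →
        (∀ y, y ≠ p → e i (p + dirv dq) y = false) ∧
        (∀ y, isEdge P (p + dirv dq) y → y ≠ p → e i y (p + dirv dq) = true) :=
      fun i hi => caseII_notact_facts hpP (hWF i) huniq (hallqp i hi) (hnactq i hi)
    have hxp0all : ∀ i, i0 ≤ i → ∀ x, x ≠ p + dirv dq → e i x p = false := by
      intro i hi x hxq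
      apply bool_false
      intro h
      have he := (hWF i).1 x p h
      exact hxq (pend_nbr' huniq x he.1 he.2.2)
    have Hx : ∀ i, i0 ≤ i → ∀ x, x ∈ P.erase p →
        ((restrictCfg (step P (e i) x) p = step (P.erase p) (restrictCfg (e i) p) x ∧
          (Activable P (e i) x ↔ Activable (P.erase p) (restrictCfg (e i) p) x)) ∨
         (¬ Activable P (e i) x ∧ ¬ Activable (P.erase p) (restrictCfg (e i) p) x)) := by
      intro i hi x hxQ
      obtain ⟨hxp, hxP⟩ := Finset.mem_erase.mp hxQ
      by_cases hxq : x = p + dirv dq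
      · right
        rw [hxq]
        exact ⟨hnactq i hi, caseII_notact_Q hqP (hfacts i hi).1 (hfacts i hi).2⟩
      · left
        have h0 := hxp0all i hi x hxq
        have hnu : ¬ (isEdge P x p ∧ e i x p = false ∧ e i p x = false) := by
          rintro ⟨he, -⟩
          exact hxq (pend_nbr' huniq x hxP he.2.2)
        exact step_restrict_comm huniq (hWF i) hxp h0 hnu
    obtain ⟨hSE, hGFair, hlift⟩ := project_exec hexec hfair hrec HnactP Hx
    obtain ⟨k, hGF⟩ := IH _ hQPS hQSC hQcard _ hSE hGFair
    have hfinP : Final P (e (i0 + k)) := hlift k hGF.1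
    have hconst : ∀ i, i0 ≤ i → e i = e (i0 + k) := by
      intro i hi
      obtain ⟨m, hm, hem⟩ := hrec i hi (i0 + k)
      rw [← hem]
      exact final_constant hexec hfinP m hm
    have hik : i0 ≤ i0 + k := Nat.le_add_right _ _
    have hcqp : e (i0 + k) (p + dirv dq) p = true := hallqp _ hik
    have hcpq : e (i0 + k) p (p + dirv dq) = false := hallf _ hik
    have hF2 := (hfacts _ hik).1
    have hF1 := (hfacts _ hik).2
    have h0k : ∀ x, x ≠ p + dirv dq → e (i0 + k) x p = false := hxp0all _ hik
    have hR1 : ∀ x ∈ P, R1 P (e (i0 + k)) x := by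
      intro x hx y hyE
      by_cases hyp : y = p
      · have hxq : x = p + dirv dq := by
          apply pend_nbr' huniq x hx
          rw [← hyp]; exact hyE.2.2
        rw [hyp, hxq]
        exact Or.inl hcqp
      · by_cases hxp : x = p
        · have hyq : y = p + dirv dq := by
            apply pend_nbr huniq y hyE.2.1
            rw [← hxp]; exact hyE.2.2
          rw [hxp, hyq]
          exact Or.inr hcqp
        · have hQ1 := (hGF.2.1 x (Finset.mem_erase.mpr ⟨hxp, hx⟩)).1 y
            ((isEdge_erase_iff hxp hyp).mpr hyE)
          rcases hQ1 with h | h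
          · left; rw [restrict_ne hxp hyp] at h; exact h
          · right; rw [restrict_ne hyp hxp] at h; exact h
    have hpred : ∀ d : Fin 6,
        ((p + dirv dq) + dirv d ∈ P ∧
          e (i0 + k) (p + dirv dq) ((p + dirv dq) + dirv d) = true) ↔ d = dq + 3 := by
      intro d
      constructor
      · rintro ⟨hmem, htrue⟩
        by_cases htp : (p + dirv dq) + dirv d = p
        · have hds : dirv d = dirv (dq + 3) := by
            have hqds := q_plus_dstar (p := p) (dq := dq)
            linear_combination htp - hqds
          exact dirv_inj _ _ hds
        · exfalso
          rw [hF2 _ htp] at htrue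
          exact Bool.noConfusion htrue
      · rintro rfl
        rw [q_plus_dstar]
        exact ⟨hpP, hcqp⟩
    have hR234 : ∀ x ∈ P, R2 P (e (i0 + k)) x ∧ R3 P (e (i0 + k)) x ∧
        R4 P (e (i0 + k)) x := by
      intro x hx
      by_cases hxp : x = p
      · rw [hxp]
        exact ⟨R2_at_p huniq, R3_at_p huniq, R4_at_p huniq⟩
      · by_cases hxq : x = p + dirv dq
        · rw [hxq]
          refine ⟨?_, ?_, ?_⟩
          · unfold R2
            have hfil : Finset.filter (fun d : Fin 6 =>
                (p + dirv dq) + dirv d ∈ P ∧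
                e (i0 + k) (p + dirv dq) ((p + dirv dq) + dirv d) = true)
                Finset.univ = {dq + 3} := by
              ext d
              simp only [Finset.mem_filter, Finset.mem_univ, true_and,
                Finset.mem_singleton]
              exact hpred d
            rw [hfil]
            simp
          · unfold R3
            have hout : outSet P (e (i0 + k)) (p + dirv dq) = {dq + 3} := by
              ext d
              exact hpred d
            rw [hout]
            exact consecutive_singleton _
          · rintro ⟨q', r', hq'P, hr'P, ha1, ha2, ha3, hc1, hc2, hc3⟩
            have hq'p : q' = p := by
              by_contra hne
              rw [hF2 q' hne] at hc1
              exact Bool.noConfusion hc1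
            rw [hq'p] at hc2
            have hr'q : r' = p + dirv dq :=
              pend_nbr huniq r' hr'P ((hWF _).1 p r' hc2).2.2
            rw [hr'q] at ha3
            exact adj_irrefl _ ha3
        · have h0 := h0k x hxq
          obtain ⟨-, hQ2, hQ3, hQ4⟩ := hGF.2.1 x (Finset.mem_erase.mpr ⟨hxp, hx⟩)
          exact ⟨(R2_iff hxp h0).mpr hQ2, (R3_iff hxp h0).mpr hQ3,
            (R4_iff huniq (hWF _) hxp h0).mpr hQ4⟩
    have hsink_iff : ∀ x, x ≠ p → x ≠ p + dirv dq →
        (IsSink P (e (i0 + k)) x ↔ IsSink (P.erase p) (restrictCfg (e (i0 + k)) p) x) := by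
      intro x hxp hxq
      unfold IsSink
      apply forall_congr'
      intro d
      rw [not_iff_not]
      exact out_pred_iff hxp (h0k x hxq) d
    obtain ⟨s, ⟨hsQ, hsink⟩, huniqS⟩ := hGF.2.2
    have hqsinkQ : IsSink (P.erase p) (restrictCfg (e (i0 + k)) p) (p + dirv dq) := by
      intro d
      rintro ⟨hmem, htrue⟩
      by_cases htp : (p + dirv dq) + dirv d = p
      · exact (Finset.mem_erase.mp hmem).1 htp
      · rw [restrict_ne q_ne_p htp] at htrue
        rw [hF2 _ htp] at htrue
        exact Bool.noConfusion htrue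
    have hsq : s = p + dirv dq :=
      (huniqS (p + dirv dq) ⟨Finset.mem_erase.mpr ⟨q_ne_p, hqP⟩, hqsinkQ⟩).symm
    have hpsink : IsSink P (e (i0 + k)) p := by
      rintro d ⟨hmem, htrue⟩
      have hd : d = dq := huniq d hmem
      rw [hd, hcpq] at htrue
      exact Bool.noConfusion htrue
    have hGFP : GoodFinal P (e (i0 + k)) := by
      refine ⟨hfinP, fun x hx => ⟨hR1 x hx, hR234 x hx⟩, ?_⟩
      refine ⟨p, ⟨hpP, hpsink⟩, ?_⟩
      rintro t ⟨htP, htsink⟩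
      by_contra htp
      have htq : t ≠ p + dirv dq := by
        rintro rfl
        refine htsink (dq + 3) ?_
        rw [q_plus_dstar]
        exact ⟨hpP, hcqp⟩
      have htQ : t ∈ P.erase p := Finset.mem_erase.mpr ⟨htp, htP⟩
      have := huniqS t ⟨htQ, (hsink_iff t htp htq).mp htsink⟩
      rw [hsq] at this
      exact htq this
    constructor
    · intro a b hE
      refine ⟨hE, ?_⟩
      intro i hi
      rw [hconst i hi]
      exact hR1 a hE.1 b hE
    · rw [hconst i0 le_rfl]
      exact hGFP
end

section
/- There exist a simply connected particle system P on the triangular grid, a configuration c₀ of P, and an infinite sequence of configurations c₀, c₁, … such that for every i some particle p_i is activable in c_i and c_{i+1} = step(c_i, p_i), and the sequence is periodic (there is T ≥ 1 with c_{i+T} = c_i for all i); in particular this sequential (unfair) execution never reaches a final configuration, and no c_i has every edge directed with R2, R3 and R4 holding at every particle. -/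
namespace Ex18

def Pex : Finset Node := {((0:ℤ),(0:ℤ)), (1,0), (0,1), (-1,1), (-1,0), (0,-1), (1,-1)}

def cfg (l : List (Node × Node)) : Cfg := fun a b => decide ((a, b) ∈ l)

lemma cfg_true {l : List (Node × Node)} {a b : Node} : cfg l a b = true ↔ (a, b) ∈ l := by
  simp [cfg]

lemma configWF_of (l : List (Node × Node))
    (h : ∀ x ∈ l, isEdge Pex x.1 x.2 ∧ (x.2, x.1) ∉ l) : ConfigWF Pex (cfg l) := by
  constructor
  · intro a b hab
    exact (h _ (cfg_true.mp hab)).1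
  · intro a b hab
    exact decide_eq_false ((h _ (cfg_true.mp hab)).2)

lemma orientOut_eq (l l' : List (Node × Node)) (p : Node)
    (h1 : ∀ x ∈ l, x.1 ≠ p → x ∈ l') (h2 : ∀ x ∈ l', x.1 ≠ p → x ∈ l)
    (hl : ∀ x ∈ l, x.2 ∈ Pex) (hl' : ∀ x ∈ l', x.2 ∈ Pex)
    (hmain : ∀ b ∈ Pex,
      (if isEdge Pex p b ∧ cfg l p b = false ∧ cfg l b p = false then true else cfg l p b)
        = cfg l' p b) :
    orientOut Pex (cfg l) p = cfg l' := by
  funext a b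
  unfold orientOut
  by_cases hap : a = p
  · subst hap
    by_cases hb : b ∈ Pex
    · have h := hmain b hb
      simpa using h
    · have e1 : cfg l a b = false := decide_eq_false (fun hm => hb (hl _ hm))
      have e2 : cfg l' a b = false := decide_eq_false (fun hm => hb (hl' _ hm))
      rw [if_neg, e1, e2]
      exact fun h => hb h.2.1.2.1
  · rw [if_neg (fun h => hap h.1)]
    exact decide_eq_decide.mpr ⟨fun hm => h1 _ hm hap, fun hm => h2 _ hm hap⟩

lemma clearOut_eq (l l' : List (Node × Node)) (p : Node)
    (h1 : ∀ x ∈ l, x.1 ≠ p → x ∈ l') (h2 : ∀ x ∈ l', x ∈ l)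
    (h3 : ∀ x ∈ l', x.1 ≠ p) :
    clearOut (cfg l) p = cfg l' := by
  funext a b
  unfold clearOut
  by_cases hap : a = p
  · subst hap
    rw [if_pos rfl]
    exact (decide_eq_false (fun hm => (h3 _ hm) rfl)).symm
  · rw [if_neg hap]
    exact decide_eq_decide.mpr ⟨fun hm => h1 _ hm hap, fun hm => h2 _ hm⟩

open Fin.NatCast in
lemma R3_single (l : List (Node × Node)) (p : Node) (a : Fin 6)
    (h : ∀ d : Fin 6, (p + dirv d ∈ Pex ∧ cfg l p (p + dirv d) = true) ↔ d = a) :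
    R3 Pex (cfg l) p := by
  refine ⟨a, 1, ?_⟩
  ext d
  simp only [outSet, Set.mem_setOf_eq, h d]
  constructor
  · rintro rfl
    exact ⟨0, zero_lt_one, by simp⟩
  · rintro ⟨j, hj, rfl⟩
    obtain rfl : j = 0 := by omega
    simp

open Fin.NatCast in
lemma R3_fail (l : List (Node × Node)) (p : Node) (a : Fin 6)
    (h0 : p + dirv a ∈ Pex ∧ cfg l p (p + dirv a) = true)
    (h2 : p + dirv (a+2) ∈ Pex ∧ cfg l p (p + dirv (a+2)) = true)
    (h1 : ¬(p + dirv (a+1) ∈ Pex ∧ cfg l p (p + dirv (a+1)) = true))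
    (h3 : ¬(p + dirv (a+3) ∈ Pex ∧ cfg l p (p + dirv (a+3)) = true)) :
    ¬ R3 Pex (cfg l) p := by
  rintro ⟨i, k, hS⟩
  have mem : ∀ d : Fin 6,
      (p + dirv d ∈ Pex ∧ cfg l p (p + dirv d) = true) ↔ ∃ j : ℕ, j < k ∧ d = i + (j : Fin 6) := by
    intro d
    have h := Set.ext_iff.mp hS d
    simpa [outSet, Set.mem_setOf_eq] using h
  by_cases hk : 6 ≤ k
  · apply h1
    rw [mem]
    refine ⟨(a + 1 - i).val, lt_of_lt_of_le (Fin.is_lt _) hk, ?_⟩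
    rw [Fin.cast_val_eq_self]
    abel
  · push_neg at hk
    obtain ⟨j0, hj0, e0⟩ := (mem a).mp h0
    obtain ⟨j2, hj2, e2⟩ := (mem (a+2)).mp h2
    rcases lt_trichotomy j0 j2 with h | h | h
    · apply h1
      rw [mem]
      refine ⟨j0 + 1, by omega, ?_⟩
      push_cast
      rw [← add_assoc, ← e0]
    · rw [h] at e0
      have heq : a + 2 = a + 0 := by rw [add_zero, e2, ← e0]
      exact absurd (add_left_cancel heq) (by decide)
    · apply h3
      rw [mem]
      refine ⟨j2 + 1, by omega, ?_⟩
      push_cast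
      rw [← add_assoc, ← e2, add_assoc]
      exact congrArg (a + ·) (by decide)

lemma tri_center : ∀ p ∈ Pex, ∀ q ∈ Pex, ∀ r ∈ Pex, adj p q → adj q r → adj r p →
    p = ((0:ℤ),(0:ℤ)) ∨ q = ((0:ℤ),(0:ℤ)) ∨ r = ((0:ℤ),(0:ℤ)) := by decide

lemma R4_all (l : List (Node × Node))
    (hWF : ∀ x ∈ l, isEdge Pex x.1 x.2)
    (hc : ∀ x ∈ l, x.2 ≠ ((0:ℤ),(0:ℤ))) :
    ∀ p, R4 Pex (cfg l) p := by
  intro p h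
  obtain ⟨q, r, hq, hr, hpq, hqr, hrp, h1, h2, h3⟩ := h
  have hp : p ∈ Pex := (hWF _ (cfg_true.mp h1)).1
  rcases tri_center p hp q hq r hr hpq hqr hrp with hh | hh | hh
  · exact hc _ (cfg_true.mp h3) (by rw [hh])
  · exact hc _ (cfg_true.mp h1) (by rw [hh])
  · exact hc _ (cfg_true.mp h2) (by rw [hh])

def L0 : List (Node × Node) := [((0, 0), (0, 1)), ((0, 0), (1, 0)), ((0, 0), (-1, 1)), ((0, 0), (-1, 0)), ((0, 0), (0, -1)), ((0, 0), (1, -1)), ((-1, 0), (0, -1))]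
def L1 : List (Node × Node) := [((0, 0), (0, 1)), ((0, 0), (1, 0)), ((0, 0), (-1, 1)), ((0, 0), (-1, 0)), ((0, 0), (0, -1)), ((0, 0), (1, -1)), ((0, -1), (1, -1)), ((-1, 0), (0, -1))]
def L2 : List (Node × Node) := [((0, 0), (0, 1)), ((0, 0), (1, 0)), ((0, 0), (-1, 1)), ((0, 0), (-1, 0)), ((0, 0), (0, -1)), ((0, 0), (1, -1)), ((1, -1), (1, 0)), ((0, -1), (1, -1)), ((-1, 0), (0, -1))]
def M2 : List (Node × Node) := [((0, 0), (0, 1)), ((0, 0), (1, 0)), ((0, 0), (-1, 1)), ((0, 0), (-1, 0)), ((0, 0), (0, -1)), ((0, 0), (1, -1)), ((-1, 0), (-1, 1)), ((1, -1), (1, 0)), ((0, -1), (1, -1)), ((-1, 0), (0, -1))]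
def L3 : List (Node × Node) := [((0, 0), (0, 1)), ((0, 0), (1, 0)), ((0, 0), (-1, 1)), ((0, 0), (-1, 0)), ((0, 0), (0, -1)), ((0, 0), (1, -1)), ((1, -1), (1, 0)), ((0, -1), (1, -1))]
def L4 : List (Node × Node) := [((0, 0), (0, 1)), ((1, 0), (0, 1)), ((0, 0), (1, 0)), ((0, 0), (-1, 1)), ((0, 0), (-1, 0)), ((0, 0), (0, -1)), ((0, 0), (1, -1)), ((1, -1), (1, 0)), ((0, -1), (1, -1))]
def L5 : List (Node × Node) := [((0, 1), (-1, 1)), ((0, 0), (0, 1)), ((1, 0), (0, 1)), ((0, 0), (1, 0)), ((0, 0), (-1, 1)), ((0, 0), (-1, 0)), ((0, 0), (0, -1)), ((0, 0), (1, -1)), ((1, -1), (1, 0)), ((0, -1), (1, -1))]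
def L6 : List (Node × Node) := [((0, 1), (-1, 1)), ((0, 0), (0, 1)), ((1, 0), (0, 1)), ((0, 0), (1, 0)), ((0, 0), (-1, 1)), ((0, 0), (-1, 0)), ((0, 0), (0, -1)), ((0, 0), (1, -1)), ((-1, 1), (-1, 0)), ((1, -1), (1, 0)), ((0, -1), (1, -1))]
def M6 : List (Node × Node) := [((0, 1), (-1, 1)), ((0, 0), (0, 1)), ((1, 0), (0, 1)), ((0, 0), (1, 0)), ((0, 0), (-1, 1)), ((0, 0), (-1, 0)), ((0, 0), (0, -1)), ((0, 0), (1, -1)), ((-1, 1), (-1, 0)), ((1, -1), (1, 0)), ((0, -1), (1, -1)), ((0, -1), (-1, 0))]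
def L7 : List (Node × Node) := [((0, 1), (-1, 1)), ((0, 0), (0, 1)), ((1, 0), (0, 1)), ((0, 0), (1, 0)), ((0, 0), (-1, 1)), ((0, 0), (-1, 0)), ((0, 0), (0, -1)), ((0, 0), (1, -1)), ((-1, 1), (-1, 0)), ((1, -1), (1, 0))]
def M7 : List (Node × Node) := [((0, 1), (-1, 1)), ((0, 0), (0, 1)), ((1, 0), (0, 1)), ((0, 0), (1, 0)), ((0, 0), (-1, 1)), ((0, 0), (-1, 0)), ((0, 0), (0, -1)), ((0, 0), (1, -1)), ((-1, 1), (-1, 0)), ((1, -1), (1, 0)), ((1, -1), (0, -1))]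
def L8 : List (Node × Node) := [((0, 1), (-1, 1)), ((0, 0), (0, 1)), ((1, 0), (0, 1)), ((0, 0), (1, 0)), ((0, 0), (-1, 1)), ((0, 0), (-1, 0)), ((0, 0), (0, -1)), ((0, 0), (1, -1)), ((-1, 1), (-1, 0))]
def L9 : List (Node × Node) := [((0, 1), (-1, 1)), ((0, 0), (0, 1)), ((1, 0), (0, 1)), ((0, 0), (1, 0)), ((0, 0), (-1, 1)), ((0, 0), (-1, 0)), ((0, 0), (0, -1)), ((0, 0), (1, -1)), ((-1, 1), (-1, 0)), ((-1, 0), (0, -1))]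
def M9 : List (Node × Node) := [((0, 1), (-1, 1)), ((0, 0), (0, 1)), ((1, 0), (0, 1)), ((0, 0), (1, 0)), ((0, 0), (-1, 1)), ((0, 0), (-1, 0)), ((0, 0), (0, -1)), ((0, 0), (1, -1)), ((-1, 1), (-1, 0)), ((1, 0), (1, -1)), ((-1, 0), (0, -1))]
def L10 : List (Node × Node) := [((0, 1), (-1, 1)), ((0, 0), (0, 1)), ((0, 0), (1, 0)), ((0, 0), (-1, 1)), ((0, 0), (-1, 0)), ((0, 0), (0, -1)), ((0, 0), (1, -1)), ((-1, 1), (-1, 0)), ((-1, 0), (0, -1))]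
def M10 : List (Node × Node) := [((0, 1), (-1, 1)), ((0, 0), (0, 1)), ((0, 1), (1, 0)), ((0, 0), (1, 0)), ((0, 0), (-1, 1)), ((0, 0), (-1, 0)), ((0, 0), (0, -1)), ((0, 0), (1, -1)), ((-1, 1), (-1, 0)), ((-1, 0), (0, -1))]
def L11 : List (Node × Node) := [((0, 0), (0, 1)), ((0, 0), (1, 0)), ((0, 0), (-1, 1)), ((0, 0), (-1, 0)), ((0, 0), (0, -1)), ((0, 0), (1, -1)), ((-1, 1), (-1, 0)), ((-1, 0), (0, -1))]
def M11 : List (Node × Node) := [((-1, 1), (0, 1)), ((0, 0), (0, 1)), ((0, 0), (1, 0)), ((0, 0), (-1, 1)), ((0, 0), (-1, 0)), ((0, 0), (0, -1)), ((0, 0), (1, -1)), ((-1, 1), (-1, 0)), ((-1, 0), (0, -1))]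

def Ls : ℕ → List (Node × Node) := fun j => match j with
  | 0 => L0
  | 1 => L1
  | 2 => L2
  | 3 => L3
  | 4 => L4
  | 5 => L5
  | 6 => L6
  | 7 => L7
  | 8 => L8
  | 9 => L9
  | 10 => L10
  | 11 => L11
  | _ => L0

lemma step0 : step Pex (cfg L0) (0, -1) = cfg L1 := by
  have ho : orientOut Pex (cfg L0) (0, -1) = cfg L1 :=
    orientOut_eq _ _ _ (by decide) (by decide) (by decide) (by decide) (by decide)
  have hcond : R2 Pex (orientOut Pex (cfg L0) (0, -1)) (0, -1) ∧
      R3 Pex (orientOut Pex (cfg L0) (0, -1)) (0, -1) ∧ R4 Pex (orientOut Pex (cfg L0) (0, -1)) (0, -1) := by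
    rw [ho]
    exact ⟨by unfold R2; decide, R3_single _ _ 0 (by decide), R4_all _ (by decide) (by decide) (0, -1)⟩
  unfold step
  rw [if_pos hcond]
  exact ho
lemma act0 : Activable Pex (cfg L0) (0, -1) := by
  unfold Activable
  rw [step0]
  intro h
  have h2 := congrFun (congrFun h (0, -1)) (1, -1)
  revert h2
  decide

lemma step1 : step Pex (cfg L1) (1, -1) = cfg L2 := by
  have ho : orientOut Pex (cfg L1) (1, -1) = cfg L2 :=
    orientOut_eq _ _ _ (by decide) (by decide) (by decide) (by decide) (by decide)
  have hcond : R2 Pex (orientOut Pex (cfg L1) (1, -1)) (1, -1) ∧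
      R3 Pex (orientOut Pex (cfg L1) (1, -1)) (1, -1) ∧ R4 Pex (orientOut Pex (cfg L1) (1, -1)) (1, -1) := by
    rw [ho]
    exact ⟨by unfold R2; decide, R3_single _ _ 1 (by decide), R4_all _ (by decide) (by decide) (1, -1)⟩
  unfold step
  rw [if_pos hcond]
  exact ho
lemma act1 : Activable Pex (cfg L1) (1, -1) := by
  unfold Activable
  rw [step1]
  intro h
  have h2 := congrFun (congrFun h (1, -1)) (1, 0)
  revert h2
  decide

lemma step2 : step Pex (cfg L2) (-1, 0) = cfg L3 := by
  have ho : orientOut Pex (cfg L2) (-1, 0) = cfg M2 :=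
    orientOut_eq _ _ _ (by decide) (by decide) (by decide) (by decide) (by decide)
  have hcond : ¬(R2 Pex (orientOut Pex (cfg L2) (-1, 0)) (-1, 0) ∧
      R3 Pex (orientOut Pex (cfg L2) (-1, 0)) (-1, 0) ∧ R4 Pex (orientOut Pex (cfg L2) (-1, 0)) (-1, 0)) := by
    rw [ho]
    rintro ⟨-, h3, -⟩
    exact R3_fail M2 (-1, 0) 5 (by decide) (by decide) (by decide) (by decide) h3
  unfold step
  rw [if_neg hcond]
  exact clearOut_eq _ _ _ (by decide) (by decide) (by decide)
lemma act2 : Activable Pex (cfg L2) (-1, 0) := by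
  unfold Activable
  rw [step2]
  intro h
  have h2 := congrFun (congrFun h (-1, 0)) (0, -1)
  revert h2
  decide

lemma step3 : step Pex (cfg L3) (1, 0) = cfg L4 := by
  have ho : orientOut Pex (cfg L3) (1, 0) = cfg L4 :=
    orientOut_eq _ _ _ (by decide) (by decide) (by decide) (by decide) (by decide)
  have hcond : R2 Pex (orientOut Pex (cfg L3) (1, 0)) (1, 0) ∧
      R3 Pex (orientOut Pex (cfg L3) (1, 0)) (1, 0) ∧ R4 Pex (orientOut Pex (cfg L3) (1, 0)) (1, 0) := by
    rw [ho]
    exact ⟨by unfold R2; decide, R3_single _ _ 2 (by decide), R4_all _ (by decide) (by decide) (1, 0)⟩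
  unfold step
  rw [if_pos hcond]
  exact ho
lemma act3 : Activable Pex (cfg L3) (1, 0) := by
  unfold Activable
  rw [step3]
  intro h
  have h2 := congrFun (congrFun h (1, 0)) (0, 1)
  revert h2
  decide

lemma step4 : step Pex (cfg L4) (0, 1) = cfg L5 := by
  have ho : orientOut Pex (cfg L4) (0, 1) = cfg L5 :=
    orientOut_eq _ _ _ (by decide) (by decide) (by decide) (by decide) (by decide)
  have hcond : R2 Pex (orientOut Pex (cfg L4) (0, 1)) (0, 1) ∧
      R3 Pex (orientOut Pex (cfg L4) (0, 1)) (0, 1) ∧ R4 Pex (orientOut Pex (cfg L4) (0, 1)) (0, 1) := by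
    rw [ho]
    exact ⟨by unfold R2; decide, R3_single _ _ 3 (by decide), R4_all _ (by decide) (by decide) (0, 1)⟩
  unfold step
  rw [if_pos hcond]
  exact ho
lemma act4 : Activable Pex (cfg L4) (0, 1) := by
  unfold Activable
  rw [step4]
  intro h
  have h2 := congrFun (congrFun h (0, 1)) (-1, 1)
  revert h2
  decide

lemma step5 : step Pex (cfg L5) (-1, 1) = cfg L6 := by
  have ho : orientOut Pex (cfg L5) (-1, 1) = cfg L6 :=
    orientOut_eq _ _ _ (by decide) (by decide) (by decide) (by decide) (by decide)
  have hcond : R2 Pex (orientOut Pex (cfg L5) (-1, 1)) (-1, 1) ∧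
      R3 Pex (orientOut Pex (cfg L5) (-1, 1)) (-1, 1) ∧ R4 Pex (orientOut Pex (cfg L5) (-1, 1)) (-1, 1) := by
    rw [ho]
    exact ⟨by unfold R2; decide, R3_single _ _ 4 (by decide), R4_all _ (by decide) (by decide) (-1, 1)⟩
  unfold step
  rw [if_pos hcond]
  exact ho
lemma act5 : Activable Pex (cfg L5) (-1, 1) := by
  unfold Activable
  rw [step5]
  intro h
  have h2 := congrFun (congrFun h (-1, 1)) (-1, 0)
  revert h2
  decide

lemma step6 : step Pex (cfg L6) (0, -1) = cfg L7 := by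
  have ho : orientOut Pex (cfg L6) (0, -1) = cfg M6 :=
    orientOut_eq _ _ _ (by decide) (by decide) (by decide) (by decide) (by decide)
  have hcond : ¬(R2 Pex (orientOut Pex (cfg L6) (0, -1)) (0, -1) ∧
      R3 Pex (orientOut Pex (cfg L6) (0, -1)) (0, -1) ∧ R4 Pex (orientOut Pex (cfg L6) (0, -1)) (0, -1)) := by
    rw [ho]
    rintro ⟨-, h3, -⟩
    exact R3_fail M6 (0, -1) 0 (by decide) (by decide) (by decide) (by decide) h3
  unfold step
  rw [if_neg hcond]
  exact clearOut_eq _ _ _ (by decide) (by decide) (by decide)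
lemma act6 : Activable Pex (cfg L6) (0, -1) := by
  unfold Activable
  rw [step6]
  intro h
  have h2 := congrFun (congrFun h (0, -1)) (1, -1)
  revert h2
  decide

lemma step7 : step Pex (cfg L7) (1, -1) = cfg L8 := by
  have ho : orientOut Pex (cfg L7) (1, -1) = cfg M7 :=
    orientOut_eq _ _ _ (by decide) (by decide) (by decide) (by decide) (by decide)
  have hcond : ¬(R2 Pex (orientOut Pex (cfg L7) (1, -1)) (1, -1) ∧
      R3 Pex (orientOut Pex (cfg L7) (1, -1)) (1, -1) ∧ R4 Pex (orientOut Pex (cfg L7) (1, -1)) (1, -1)) := by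
    rw [ho]
    rintro ⟨-, h3, -⟩
    exact R3_fail M7 (1, -1) 1 (by decide) (by decide) (by decide) (by decide) h3
  unfold step
  rw [if_neg hcond]
  exact clearOut_eq _ _ _ (by decide) (by decide) (by decide)
lemma act7 : Activable Pex (cfg L7) (1, -1) := by
  unfold Activable
  rw [step7]
  intro h
  have h2 := congrFun (congrFun h (1, -1)) (1, 0)
  revert h2
  decide

lemma step8 : step Pex (cfg L8) (-1, 0) = cfg L9 := by
  have ho : orientOut Pex (cfg L8) (-1, 0) = cfg L9 :=
    orientOut_eq _ _ _ (by decide) (by decide) (by decide) (by decide) (by decide)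
  have hcond : R2 Pex (orientOut Pex (cfg L8) (-1, 0)) (-1, 0) ∧
      R3 Pex (orientOut Pex (cfg L8) (-1, 0)) (-1, 0) ∧ R4 Pex (orientOut Pex (cfg L8) (-1, 0)) (-1, 0) := by
    rw [ho]
    exact ⟨by unfold R2; decide, R3_single _ _ 5 (by decide), R4_all _ (by decide) (by decide) (-1, 0)⟩
  unfold step
  rw [if_pos hcond]
  exact ho
lemma act8 : Activable Pex (cfg L8) (-1, 0) := by
  unfold Activable
  rw [step8]
  intro h
  have h2 := congrFun (congrFun h (-1, 0)) (0, -1)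
  revert h2
  decide

lemma step9 : step Pex (cfg L9) (1, 0) = cfg L10 := by
  have ho : orientOut Pex (cfg L9) (1, 0) = cfg M9 :=
    orientOut_eq _ _ _ (by decide) (by decide) (by decide) (by decide) (by decide)
  have hcond : ¬(R2 Pex (orientOut Pex (cfg L9) (1, 0)) (1, 0) ∧
      R3 Pex (orientOut Pex (cfg L9) (1, 0)) (1, 0) ∧ R4 Pex (orientOut Pex (cfg L9) (1, 0)) (1, 0)) := by
    rw [ho]
    rintro ⟨-, h3, -⟩
    exact R3_fail M9 (1, 0) 2 (by decide) (by decide) (by decide) (by decide) h3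
  unfold step
  rw [if_neg hcond]
  exact clearOut_eq _ _ _ (by decide) (by decide) (by decide)
lemma act9 : Activable Pex (cfg L9) (1, 0) := by
  unfold Activable
  rw [step9]
  intro h
  have h2 := congrFun (congrFun h (1, 0)) (0, 1)
  revert h2
  decide

lemma step10 : step Pex (cfg L10) (0, 1) = cfg L11 := by
  have ho : orientOut Pex (cfg L10) (0, 1) = cfg M10 :=
    orientOut_eq _ _ _ (by decide) (by decide) (by decide) (by decide) (by decide)
  have hcond : ¬(R2 Pex (orientOut Pex (cfg L10) (0, 1)) (0, 1) ∧
      R3 Pex (orientOut Pex (cfg L10) (0, 1)) (0, 1) ∧ R4 Pex (orientOut Pex (cfg L10) (0, 1)) (0, 1)) := by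
    rw [ho]
    rintro ⟨-, h3, -⟩
    exact R3_fail M10 (0, 1) 3 (by decide) (by decide) (by decide) (by decide) h3
  unfold step
  rw [if_neg hcond]
  exact clearOut_eq _ _ _ (by decide) (by decide) (by decide)
lemma act10 : Activable Pex (cfg L10) (0, 1) := by
  unfold Activable
  rw [step10]
  intro h
  have h2 := congrFun (congrFun h (0, 1)) (-1, 1)
  revert h2
  decide

lemma step11 : step Pex (cfg L11) (-1, 1) = cfg L0 := by
  have ho : orientOut Pex (cfg L11) (-1, 1) = cfg M11 :=
    orientOut_eq _ _ _ (by decide) (by decide) (by decide) (by decide) (by decide)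
  have hcond : ¬(R2 Pex (orientOut Pex (cfg L11) (-1, 1)) (-1, 1) ∧
      R3 Pex (orientOut Pex (cfg L11) (-1, 1)) (-1, 1) ∧ R4 Pex (orientOut Pex (cfg L11) (-1, 1)) (-1, 1)) := by
    rw [ho]
    rintro ⟨-, h3, -⟩
    exact R3_fail M11 (-1, 1) 4 (by decide) (by decide) (by decide) (by decide) h3
  unfold step
  rw [if_neg hcond]
  exact clearOut_eq _ _ _ (by decide) (by decide) (by decide)
lemma act11 : Activable Pex (cfg L11) (-1, 1) := by
  unfold Activable
  rw [step11]
  intro h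
  have h2 := congrFun (congrFun h (-1, 1)) (-1, 0)
  revert h2
  decide

lemma wf0 : ConfigWF Pex (cfg L0) := configWF_of _ (by decide)
lemma wf1 : ConfigWF Pex (cfg L1) := configWF_of _ (by decide)
lemma wf2 : ConfigWF Pex (cfg L2) := configWF_of _ (by decide)
lemma wf3 : ConfigWF Pex (cfg L3) := configWF_of _ (by decide)
lemma wf4 : ConfigWF Pex (cfg L4) := configWF_of _ (by decide)
lemma wf5 : ConfigWF Pex (cfg L5) := configWF_of _ (by decide)
lemma wf6 : ConfigWF Pex (cfg L6) := configWF_of _ (by decide)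
lemma wf7 : ConfigWF Pex (cfg L7) := configWF_of _ (by decide)
lemma wf8 : ConfigWF Pex (cfg L8) := configWF_of _ (by decide)
lemma wf9 : ConfigWF Pex (cfg L9) := configWF_of _ (by decide)
lemma wf10 : ConfigWF Pex (cfg L10) := configWF_of _ (by decide)
lemma wf11 : ConfigWF Pex (cfg L11) := configWF_of _ (by decide)

lemma hsteps : ∀ i : ℕ, ∃ p ∈ Pex, Activable Pex (cfg (Ls (i % 12))) p ∧
    cfg (Ls ((i+1) % 12)) = step Pex (cfg (Ls (i % 12))) p := by
  intro i
  have hd : i % 12 = 0 ∨ i % 12 = 1 ∨ i % 12 = 2 ∨ i % 12 = 3 ∨ i % 12 = 4 ∨ i % 12 = 5 ∨ i % 12 = 6 ∨ i % 12 = 7 ∨ i % 12 = 8 ∨ i % 12 = 9 ∨ i % 12 = 10 ∨ i % 12 = 11 := by omega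
  rcases hd with h|h|h|h|h|h|h|h|h|h|h|h
  · have h' : (i+1) % 12 = 1 := by omega
    rw [h, h']
    exact ⟨(0, -1), by decide, act0, (step0).symm⟩
  · have h' : (i+1) % 12 = 2 := by omega
    rw [h, h']
    exact ⟨(1, -1), by decide, act1, (step1).symm⟩
  · have h' : (i+1) % 12 = 3 := by omega
    rw [h, h']
    exact ⟨(-1, 0), by decide, act2, (step2).symm⟩
  · have h' : (i+1) % 12 = 4 := by omega
    rw [h, h']
    exact ⟨(1, 0), by decide, act3, (step3).symm⟩
  · have h' : (i+1) % 12 = 5 := by omega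
    rw [h, h']
    exact ⟨(0, 1), by decide, act4, (step4).symm⟩
  · have h' : (i+1) % 12 = 6 := by omega
    rw [h, h']
    exact ⟨(-1, 1), by decide, act5, (step5).symm⟩
  · have h' : (i+1) % 12 = 7 := by omega
    rw [h, h']
    exact ⟨(0, -1), by decide, act6, (step6).symm⟩
  · have h' : (i+1) % 12 = 8 := by omega
    rw [h, h']
    exact ⟨(1, -1), by decide, act7, (step7).symm⟩
  · have h' : (i+1) % 12 = 9 := by omega
    rw [h, h']
    exact ⟨(-1, 0), by decide, act8, (step8).symm⟩
  · have h' : (i+1) % 12 = 10 := by omega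
    rw [h, h']
    exact ⟨(1, 0), by decide, act9, (step9).symm⟩
  · have h' : (i+1) % 12 = 11 := by omega
    rw [h, h']
    exact ⟨(0, 1), by decide, act10, (step10).symm⟩
  · have h' : (i+1) % 12 = 0 := by omega
    rw [h, h']
    exact ⟨(-1, 1), by decide, act11, (step11).symm⟩

lemma hwf : ∀ i : ℕ, ConfigWF Pex (cfg (Ls (i % 12))) := by
  intro i
  have hd : i % 12 = 0 ∨ i % 12 = 1 ∨ i % 12 = 2 ∨ i % 12 = 3 ∨ i % 12 = 4 ∨ i % 12 = 5 ∨ i % 12 = 6 ∨ i % 12 = 7 ∨ i % 12 = 8 ∨ i % 12 = 9 ∨ i % 12 = 10 ∨ i % 12 = 11 := by omega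
  rcases hd with h|h|h|h|h|h|h|h|h|h|h|h
  · rw [h]; exact wf0
  · rw [h]; exact wf1
  · rw [h]; exact wf2
  · rw [h]; exact wf3
  · rw [h]; exact wf4
  · rw [h]; exact wf5
  · rw [h]; exact wf6
  · rw [h]; exact wf7
  · rw [h]; exact wf8
  · rw [h]; exact wf9
  · rw [h]; exact wf10
  · rw [h]; exact wf11

lemma hR2bad : ∀ i : ℕ, ¬ R2 Pex (cfg (Ls (i % 12))) ((0:ℤ),(0:ℤ)) := by
  intro i h2
  have hd : i % 12 = 0 ∨ i % 12 = 1 ∨ i % 12 = 2 ∨ i % 12 = 3 ∨ i % 12 = 4 ∨ i % 12 = 5 ∨ i % 12 = 6 ∨ i % 12 = 7 ∨ i % 12 = 8 ∨ i % 12 = 9 ∨ i % 12 = 10 ∨ i % 12 = 11 := by omega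
  rcases hd with h|h|h|h|h|h|h|h|h|h|h|h
  · rw [h] at h2; unfold R2 at h2; revert h2; decide
  · rw [h] at h2; unfold R2 at h2; revert h2; decide
  · rw [h] at h2; unfold R2 at h2; revert h2; decide
  · rw [h] at h2; unfold R2 at h2; revert h2; decide
  · rw [h] at h2; unfold R2 at h2; revert h2; decide
  · rw [h] at h2; unfold R2 at h2; revert h2; decide
  · rw [h] at h2; unfold R2 at h2; revert h2; decide
  · rw [h] at h2; unfold R2 at h2; revert h2; decide
  · rw [h] at h2; unfold R2 at h2; revert h2; decide
  · rw [h] at h2; unfold R2 at h2; revert h2; decide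
  · rw [h] at h2; unfold R2 at h2; revert h2; decide
  · rw [h] at h2; unfold R2 at h2; revert h2; decide

lemma adj_symm {a b : Node} (h : adj a b) : adj b a := by
  obtain ⟨i, rfl⟩ := h
  refine ⟨i + 3, ?_⟩
  have hd : dirv (i + 3) = -dirv i := by fin_cases i <;> decide
  rw [hd]
  exact (add_neg_cancel_right a (dirv i)).symm

lemma reach_symm {S : Set Node} {a b : Node} (h : reach S a b) : reach S b a := by
  refine @Std.Symm.symm _ _ (@Relation.ReflTransGen.stdSymm _ _ ⟨?_⟩) _ _ h
  rintro x y ⟨h1, h2, h3⟩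
  exact ⟨h2, h1, adj_symm h3⟩

lemma connP : ConnectedOn (↑Pex : Set Node) := by
  have hc : ∀ a ∈ (↑Pex : Set Node), reach (↑Pex : Set Node) ((0:ℤ),(0:ℤ)) a := by
    intro a ha
    have ha' : a ∈ Pex := ha
    fin_cases ha' <;>
      first
        | exact Relation.ReflTransGen.refl
        | exact Relation.ReflTransGen.single
            ⟨Finset.mem_coe.mpr (by decide), Finset.mem_coe.mpr (by decide), by decide⟩
  intro a ha b hb
  exact (reach_symm (hc a ha)).trans (hc b hb)

abbrev Sx : Set Node := {v : Node | v ∉ Pex}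

lemma mem_Sx {x y : ℤ} (h : 2 ≤ x ∨ x ≤ -2 ∨ 2 ≤ y ∨ y ≤ -2) : ((x, y) : Node) ∈ Sx := by
  intro hv
  simp only [Pex, Finset.mem_insert, Finset.mem_singleton, Prod.mk.injEq] at hv
  omega

lemma adjX {x y x' y' : ℤ} (i : Fin 6) (h1 : x' = x + (dirv i).1) (h2 : y' = y + (dirv i).2) :
    adj (x, y) (x', y') := ⟨i, by simp [Prod.ext_iff, h1, h2]⟩

lemma stepSx {a b : Node} (ha : a ∈ Sx) (hb : b ∈ Sx) (h : adj a b) : reach Sx a b :=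
  Relation.ReflTransGen.single ⟨ha, hb, h⟩

lemma dirv0 : dirv 0 = ((1:ℤ), (0:ℤ)) := by decide
lemma dirv1 : dirv 1 = ((0:ℤ), (1:ℤ)) := by decide
lemma dirv3 : dirv 3 = ((-1:ℤ), (0:ℤ)) := by decide
lemma dirv4 : dirv 4 = ((0:ℤ), (-1:ℤ)) := by decide

lemma reach_row {y : ℤ} (hy : 2 ≤ y ∨ y ≤ -2) : ∀ x : ℤ, reach Sx (x, y) (2, y) := by
  intro x
  refine Int.inductionOn' x 2 Relation.ReflTransGen.refl (fun k hk ih => ?_) (fun k hk ih => ?_)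
  · exact (stepSx (mem_Sx (by tauto)) (mem_Sx (by tauto))
      (adjX 3 (by rw [dirv3]; ring) (by rw [dirv3]; ring))).trans ih
  · exact (stepSx (mem_Sx (by tauto)) (mem_Sx (by tauto))
      (adjX 0 (by rw [dirv0]; ring) (by rw [dirv0]; ring))).trans ih

lemma reach_col {x : ℤ} (hx : 2 ≤ x ∨ x ≤ -2) : ∀ y : ℤ, reach Sx (x, y) (x, 2) := by
  intro y
  refine Int.inductionOn' y 2 Relation.ReflTransGen.refl (fun k hk ih => ?_) (fun k hk ih => ?_)
  · exact (stepSx (mem_Sx (by tauto)) (mem_Sx (by tauto))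
      (adjX 4 (by rw [dirv4]; ring) (by rw [dirv4]; ring))).trans ih
  · exact (stepSx (mem_Sx (by tauto)) (mem_Sx (by tauto))
      (adjX 1 (by rw [dirv1]; ring) (by rw [dirv1]; ring))).trans ih

lemma reach_right {y : ℤ} : ∀ x : ℤ, 2 ≤ x → reach Sx (x, y) (2, y) := by
  intro x
  refine Int.inductionOn' x 2 (fun _ => Relation.ReflTransGen.refl)
    (fun k hk ih _ => ?_) (fun k hk ih h => absurd h (by omega))
  exact (stepSx (mem_Sx (by omega)) (mem_Sx (by omega))
    (adjX 3 (by rw [dirv3]; ring) (by rw [dirv3]; ring))).trans (ih hk)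

lemma reach_left {y : ℤ} : ∀ x : ℤ, x ≤ -2 → reach Sx (x, y) (-2, y) := by
  intro x
  refine Int.inductionOn' x (-2) (fun _ => Relation.ReflTransGen.refl)
    (fun k hk ih h => absurd h (by omega)) (fun k hk ih _ => ?_)
  exact (stepSx (mem_Sx (by omega)) (mem_Sx (by omega))
    (adjX 0 (by rw [dirv0]; ring) (by rw [dirv0]; ring))).trans (ih hk)

lemma top2 : reach Sx ((2:ℤ), (2:ℤ)) ((0:ℤ), (2:ℤ)) := by
  refine (stepSx (mem_Sx (by omega)) (mem_Sx (by omega))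
    (adjX 3 (by rw [dirv3]; ring) (by rw [dirv3]; ring))).trans
    (stepSx (mem_Sx (by omega)) (mem_Sx (by omega))
    (adjX 3 (by rw [dirv3]; ring) (by rw [dirv3]; ring)) : reach Sx ((1:ℤ),(2:ℤ)) ((0:ℤ),(2:ℤ)))

lemma canonSx : ∀ v ∈ Sx, reach Sx v ((0:ℤ), (2:ℤ)) := by
  rintro ⟨x, y⟩ hv
  by_cases hy : 2 ≤ y ∨ y ≤ -2
  · exact ((reach_row hy x).trans (reach_col (Or.inl le_rfl) y)).trans top2
  · push_neg at hy
    by_cases hx : 2 ≤ x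
    · exact ((reach_right x hx).trans (reach_col (Or.inl le_rfl) y)).trans top2
    · by_cases hx2 : x ≤ -2
      · exact (((reach_left x hx2).trans (reach_col (Or.inr le_rfl) y)).trans
          ((reach_row (Or.inl le_rfl) (-2)).trans top2))
      · have hv' : ((x, y) : Node) ∉ Pex := hv
        have hcase : (x = 1 ∧ y = 1) ∨ (x = -1 ∧ y = -1) := by
          simp only [Pex, Finset.mem_insert, Finset.mem_singleton, Prod.mk.injEq, not_or] at hv'
          omega
        rcases hcase with ⟨rfl, rfl⟩ | ⟨rfl, rfl⟩
        · exact ((stepSx hv (mem_Sx (by omega))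
            (adjX 0 (by rw [dirv0]; ring) (by rw [dirv0]; ring))).trans
            (reach_col (Or.inl le_rfl) 1)).trans top2
        · exact (((stepSx hv (mem_Sx (by omega))
            (adjX 3 (by rw [dirv3]; ring) (by rw [dirv3]; ring))).trans
            (reach_col (Or.inr le_rfl) (-1))).trans
            ((reach_row (Or.inl le_rfl) (-2)).trans top2))

lemma simplyP : SimplyConnected Pex := by
  intro a ha b hb
  exact (canonSx a ha).trans (reach_symm (canonSx b hb))

end Ex18


/-- there is a simply connected particle system with a periodic sequential
(unfair) execution in which some particle is activated at every step; it never reaches a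
final configuration and never satisfies all of R1, R2, R3, R4 at every particle. -/
theorem exists_periodic_unfair_execution :
    ∃ (P : Finset Node) (e : ℕ → Cfg), IsParticleSystem P ∧ SimplyConnected P ∧
      (∀ i, ConfigWF P (e i)) ∧
      (∀ i : ℕ, ∃ p ∈ P, Activable P (e i) p ∧ e (i+1) = step P (e i) p) ∧
      (∃ T : ℕ, 1 ≤ T ∧ ∀ i, e (i + T) = e i) ∧
      (∀ i, ¬ Final P (e i)) ∧
      (∀ i, ¬ ∀ p ∈ P, R1 P (e i) p ∧ R2 P (e i) p ∧ R3 P (e i) p ∧ R4 P (e i) p) := by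
  classical
  refine ⟨Ex18.Pex, fun i => Ex18.cfg (Ex18.Ls (i % 12)),
    ⟨⟨((0:ℤ),(0:ℤ)), by decide⟩, Ex18.connP⟩, Ex18.simplyP,
    fun i => Ex18.hwf i, fun i => ?_,
    ⟨12, by norm_num, fun i => by simp [Nat.add_mod_right]⟩,
    fun i hF => ?_, fun i hall => ?_⟩
  · exact Ex18.hsteps i
  · obtain ⟨p, hp, hact, heq⟩ := Ex18.hsteps i
    exact hF p hact
  · exact Ex18.hR2bad i (hall ((0:ℤ),(0:ℤ)) (by decide)).2.1
end
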